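/- arXiv:1708.00196 — 10 statements merged into one kernel-verified Lean document; each statement's English description precedes it below -/
import Mathlib

section
/- Let k ≥ 2 and n ≥ 2k² + 3. Let f(x) = x⁴ − (n² − 2n + 2k)x² + 2k(n−k)(n−2). Then f(n−1) > 0, and f′(x) > 0 for all x ≥ n−1; consequently every real root of f is strictly less than n−1. -/
/-!
Write `f(x) = x⁴ − b x² + d` with `b = n² − 2n + 2k`. Its derivative `2x(2x² − b)` is positive
as soon as `2x² > b`, and `2(n−1)² − b = n(n − 2) + 2 − 2k > 0`; so `f` is strictly increasing
on `[n−1, ∞)`. Moreover `f(n−1) = n(n − 2k² − 2) + 4k² − 2k + 1 > 0`, hence `f` has no root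
`x ≥ n−1`.
-/

open Set

section Biquadratic

variable {a b : ℝ}

theorem hasDerivAt_biquadratic (b d x : ℝ) :
    HasDerivAt (fun x : ℝ => x ^ 4 - b * x ^ 2 + d) (4 * x ^ 3 - b * (2 * x)) x := by
  simpa using (((hasDerivAt_pow 4 x).sub ((hasDerivAt_pow 2 x).const_mul b)).add_const d)

theorem deriv_biquadratic_pos (d : ℝ) (ha : 0 < a) (hb : b < 2 * a ^ 2) {x : ℝ}
    (hx : a ≤ x) : 0 < deriv (fun x : ℝ => x ^ 4 - b * x ^ 2 + d) x := by
  have hx0 : 0 < x := ha.trans_le hx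
  have hbx : 0 < 2 * x ^ 2 - b := by nlinarith
  rw [(hasDerivAt_biquadratic b d x).deriv]
  nlinarith [mul_pos hx0 hbx]

theorem strictMonoOn_biquadratic (d : ℝ) (ha : 0 < a) (hb : b < 2 * a ^ 2) :
    StrictMonoOn (fun x : ℝ => x ^ 4 - b * x ^ 2 + d) (Ici a) := by
  refine strictMonoOn_of_deriv_pos (convex_Ici a) (by fun_prop) fun x hx => ?_
  rw [interior_Ici] at hx
  exact deriv_biquadratic_pos d ha hb (le_of_lt hx)

theorem lt_of_biquadratic_eq_zero {d x : ℝ} (ha : 0 < a) (hb : b < 2 * a ^ 2)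
    (hfa : 0 < a ^ 4 - b * a ^ 2 + d) (hx : x ^ 4 - b * x ^ 2 + d = 0) : x < a := by
  by_contra! hax
  have hmono := (strictMonoOn_biquadratic d ha hb).monotoneOn self_mem_Ici hax hax
  linarith

end Biquadratic

section SpectralPolynomial

variable {n k : ℝ}

theorem spectral_coeff_lt (hn : 2 * k ^ 2 + 3 ≤ n) : n ^ 2 - 2 * n + 2 * k < 2 * (n - 1) ^ 2 := by
  nlinarith [sq_nonneg (k - 1)]

theorem spectral_poly_pred_pos (hn : 2 * k ^ 2 + 3 ≤ n) :
    0 < (n - 1) ^ 4 - (n ^ 2 - 2 * n + 2 * k) * (n - 1) ^ 2 + 2 * k * (n - k) * (n - 2) := by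
  have hval : (n - 1) ^ 4 - (n ^ 2 - 2 * n + 2 * k) * (n - 1) ^ 2 + 2 * k * (n - k) * (n - 2)
      = n * (n - 2 * k ^ 2 - 2) + (4 * k ^ 2 - 2 * k + 1) := by ring
  rw [hval]
  nlinarith [sq_nonneg (2 * k - 1 / 2)]

end SpectralPolynomial

theorem stmt3_general (n k : ℕ) (hn : 2 * k ^ 2 + 3 ≤ n) (f : ℝ → ℝ)
    (hf : ∀ x : ℝ, f x = x ^ 4 - ((n : ℝ) ^ 2 - 2 * n + 2 * k) * x ^ 2
        + 2 * k * ((n : ℝ) - k) * ((n : ℝ) - 2)) :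
    0 < f ((n : ℝ) - 1) ∧ (∀ x : ℝ, (n : ℝ) - 1 ≤ x → 0 < deriv f x) ∧
    ∀ x : ℝ, f x = 0 → x < (n : ℝ) - 1 := by
  have hn' : 2 * (k : ℝ) ^ 2 + 3 ≤ n := by exact_mod_cast hn
  have ha : 0 < (n : ℝ) - 1 := by nlinarith
  have hb := spectral_coeff_lt hn'
  have hpos := spectral_poly_pred_pos hn'
  obtain rfl : f = _ := funext hf
  exact ⟨hpos, fun x => deriv_biquadratic_pos _ ha hb,
    fun x => lt_of_biquadratic_eq_zero ha hb hpos⟩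

/-- For `k ≥ 2`, `n ≥ 2k² + 3` and
`f(x) = x⁴ − (n² − 2n + 2k)x² + 2k(n−k)(n−2)`: `f(n−1) > 0`, `f′(x) > 0` for `x ≥ n−1`,
and every real root of `f` is `< n−1`. -/
theorem stmt3 (n k : ℕ) (hk : 2 ≤ k) (hn : 2 * k ^ 2 + 3 ≤ n) (f : ℝ → ℝ)
    (hf : ∀ x : ℝ, f x = x ^ 4 - ((n : ℝ) ^ 2 - 2 * n + 2 * k) * x ^ 2
        + 2 * k * ((n : ℝ) - k) * ((n : ℝ) - 2)) :
    0 < f ((n : ℝ) - 1) ∧ (∀ x : ℝ, (n : ℝ) - 1 ≤ x → 0 < deriv f x) ∧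
    ∀ x : ℝ, f x = 0 → x < (n : ℝ) - 1 :=
  stmt3_general n k hn f hf
end

section
/- Let p ≥ 0, k ≥ p + 1, n ≥ 2k − p + 2 be integers, and let f₁(x) = x³ − (3n+p−1)x² + (2n² + (2k+p)n − (2k+1)(k−p+1))x − (2n−1)(n−k+p−1)(k+1). Then f₁(2n−1) = (2n−1)(n−k−1)(k−p) > 0 and f₁′(x) > 0 for all x ≥ 2n−1; consequently every real root of f₁ is strictly less than 2n−1. -/
/-! `f₁(2n−1)` factors as `(2n−1)(n−k−1)(k−p)`. The derivative `f₁'` is an upward parabola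
whose vertex `(3n+p−1)/3` lies left of `2n−1` and which is positive at `2n−1`, so `f₁` is
strictly increasing on `[2n−1, ∞)` and hence has no root there. -/

section MonicCubic

variable (b c d : ℝ)

theorem hasDerivAt_monic_cubic (x : ℝ) :
    HasDerivAt (fun x => x ^ 3 - b * x ^ 2 + c * x - d) (3 * x ^ 2 - 2 * b * x + c) x := by
  refine ((((hasDerivAt_pow 3 x).sub ((hasDerivAt_pow 2 x).const_mul b)).add
    ((hasDerivAt_id x).const_mul c)).sub_const d).congr_deriv ?_
  push_cast
  ring

variable {b c}

theorem monic_cubic_deriv_pos_of_le {m x : ℝ} (hm : 0 < 3 * m ^ 2 - 2 * b * m + c)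
    (hvertex : b ≤ 3 * m) (hx : m ≤ x) : 0 < 3 * x ^ 2 - 2 * b * x + c := by
  have hexpand : 3 * x ^ 2 - 2 * b * x + c
      = (3 * m ^ 2 - 2 * b * m + c) + 2 * (3 * m - b) * (x - m) + 3 * (x - m) ^ 2 := by ring
  rw [hexpand]
  have : 0 ≤ (3 * m - b) * (x - m) := mul_nonneg (by linarith) (by linarith)
  positivity

end MonicCubic

theorem lt_of_eq_zero_of_deriv_pos {f : ℝ → ℝ} {a x : ℝ} (hf : Differentiable ℝ f)
    (hfa : 0 < f a) (hderiv : ∀ y, a ≤ y → 0 < deriv f y) (hx : f x = 0) : x < a := by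
  by_contra! hax
  have hmono : StrictMonoOn f (Set.Ici a) :=
    strictMonoOn_of_deriv_pos (convex_Ici a) hf.continuous.continuousOn
      fun y hy => hderiv y (by rw [interior_Ici] at hy; exact hy.le)
  have := hmono.monotoneOn Set.self_mem_Ici hax hax
  linarith

/-- For integers `p ≥ 0`, `k ≥ p + 1`, `n ≥ 2k − p + 2` and the given
cubic `f₁`: `f₁(2n−1) = (2n−1)(n−k−1)(k−p) > 0` and `f₁′(x) > 0` for `x ≥ 2n−1`;
consequently every real root of `f₁` is `< 2n−1`. -/
theorem stmt7 (p k n : ℕ) (hk : p + 1 ≤ k) (hn : 2 * k + 2 ≤ n + p) (f₁ : ℝ → ℝ)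
    (hf : ∀ x : ℝ, f₁ x = x ^ 3 - (3 * (n : ℝ) + p - 1) * x ^ 2
        + (2 * (n : ℝ) ^ 2 + (2 * (k : ℝ) + p) * n
            - (2 * (k : ℝ) + 1) * ((k : ℝ) - p + 1)) * x
        - (2 * (n : ℝ) - 1) * ((n : ℝ) - k + p - 1) * ((k : ℝ) + 1)) :
    f₁ (2 * (n : ℝ) - 1) = (2 * (n : ℝ) - 1) * ((n : ℝ) - k - 1) * ((k : ℝ) - p) ∧
    0 < f₁ (2 * (n : ℝ) - 1) ∧
    (∀ x : ℝ, 2 * (n : ℝ) - 1 ≤ x → 0 < deriv f₁ x) ∧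
    ∀ x : ℝ, f₁ x = 0 → x < 2 * (n : ℝ) - 1 := by
  have hkp : (p : ℝ) + 1 ≤ k := by exact_mod_cast hk
  have hnk : 2 * (k : ℝ) + 2 ≤ n + p := by exact_mod_cast hn
  have hp : (0 : ℝ) ≤ p := p.cast_nonneg
  have hderiv := hasDerivAt_monic_cubic (3 * (n : ℝ) + p - 1)
    (2 * (n : ℝ) ^ 2 + (2 * (k : ℝ) + p) * n - (2 * (k : ℝ) + 1) * ((k : ℝ) - p + 1))
    ((2 * (n : ℝ) - 1) * ((n : ℝ) - k + p - 1) * ((k : ℝ) + 1))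
  rw [← funext hf] at hderiv
  have hval : f₁ (2 * (n : ℝ) - 1) = (2 * (n : ℝ) - 1) * ((n : ℝ) - k - 1) * ((k : ℝ) - p) := by
    rw [hf]; ring
  have hval_pos : 0 < f₁ (2 * (n : ℝ) - 1) := by
    rw [hval]
    have : 0 < 2 * (n : ℝ) - 1 := by linarith
    have : 0 < (n : ℝ) - k - 1 := by linarith
    have : 0 < (k : ℝ) - p := by linarith
    positivity
  have hderiv_pos : ∀ x : ℝ, 2 * (n : ℝ) - 1 ≤ x → 0 < deriv f₁ x := by
    intro x hx
    rw [(hderiv x).deriv]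
    refine monic_cubic_deriv_pos_of_le ?_ (by linarith) hx
    have ha : (0 : ℝ) ≤ k - p - 1 := by linarith
    have hb : (0 : ℝ) ≤ n + p - 2 * k - 2 := by linarith
    nlinarith [mul_nonneg ha ha, mul_nonneg hb hb, mul_nonneg ha hb,
      mul_nonneg ha hp, mul_nonneg hb hp, sq_nonneg (p : ℝ)]
  exact ⟨hval, hval_pos, hderiv_pos, fun x hx =>
    lt_of_eq_zero_of_deriv_pos (fun y => (hderiv y).differentiableAt) hval_pos hderiv_pos hx⟩
end

section
/- Let G be an (n+p+2)-closed balanced bipartite graph of order 2n with parts X, Y of size n each, where k ≥ p ≥ 0 and n ≥ 2k − p + 2. If e(G) > n(n−k+p−1) + (k+2)(k−p+1), then G contains a complete bipartite subgraph K_{s,t} with s + t ≥ 2n − k + p (a complete bipartite subgraph of order at least 2n − k + p). -/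
open Finset

lemma koenig_cover {α β : Type*} [DecidableEq α] [DecidableEq β] (r : ℕ) (R : Finset (α × β))
    (hm : ∀ S ⊆ R, (∀ e₁ ∈ S, ∀ e₂ ∈ S, e₁.1 = e₂.1 → e₁ = e₂) →
      (∀ e₁ ∈ S, ∀ e₂ ∈ S, e₁.2 = e₂.2 → e₁ = e₂) → S.card ≤ r) :
    ∃ (Dx : Finset α) (Dy : Finset β), Dx ⊆ R.image Prod.fst ∧ Dy ⊆ R.image Prod.snd ∧
      Dx.card + Dy.card ≤ r ∧ ∀ e ∈ R, e.1 ∈ Dx ∨ e.2 ∈ Dy := by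
  classical
  set Xs := R.image Prod.fst with hXs
  set N : Finset α → Finset β := fun s => (R.filter (fun e => e.1 ∈ s)).image Prod.snd with hN
  obtain ⟨S0, hS0mem, hS0max⟩ := Finset.exists_max_image Xs.powerset
    (fun s => s.card - (N s).card) ⟨∅, Finset.empty_mem_powerset _⟩
  have hS0sub : S0 ⊆ Xs := Finset.mem_powerset.mp hS0mem
  set d : ℕ := S0.card - (N S0).card with hd
  have hdle : ∀ s ⊆ Xs, s.card ≤ (N s).card + d := by
    intro s hs
    have := hS0max s (Finset.mem_powerset.mpr hs)
    omega
  -- the cover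
  set Sstar : Finset α := if (N S0).card < S0.card then S0 else ∅ with hSstar
  have hSsub : Sstar ⊆ Xs := by
    rw [hSstar]; split
    · exact hS0sub
    · exact Finset.empty_subset _
  have hNempty : N ∅ = ∅ := by
    simp [hN]
  have hsize : (Xs \ Sstar).card + (N Sstar).card + d = Xs.card := by
    rw [hSstar]; split
    · rw [Finset.card_sdiff_of_subset hS0sub]
      have := Finset.card_le_card hS0sub
      omega
    · rw [hNempty]
      simp only [Finset.sdiff_empty, Finset.card_empty]
      omega
  set Dx := Xs \ Sstar with hDx
  set Dy := N Sstar with hDy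
  have hcover : ∀ e ∈ R, e.1 ∈ Dx ∨ e.2 ∈ Dy := by
    intro e he
    by_cases h : e.1 ∈ Sstar
    · right
      exact Finset.mem_image.mpr ⟨e, Finset.mem_filter.mpr ⟨he, h⟩, rfl⟩
    · left
      exact Finset.mem_sdiff.mpr ⟨Finset.mem_image_of_mem _ he, h⟩
  -- Hall's theorem setup
  set t : {x // x ∈ Xs} → Finset (β ⊕ Fin d) := fun x =>
    ((N {(x : α)}).map ⟨Sum.inl, Sum.inl_injective⟩) ∪
      (Finset.univ.map ⟨Sum.inr, Sum.inr_injective⟩) with ht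
  have hall : ∀ s : Finset {x // x ∈ Xs}, s.card ≤ (s.biUnion t).card := by
    intro s
    rcases s.eq_empty_or_nonempty with rfl | hs
    · simp
    · set s' := s.image Subtype.val with hs'
      have hs'sub : s' ⊆ Xs := by
        intro a ha
        obtain ⟨x, _, rfl⟩ := Finset.mem_image.mp ha
        exact x.2
      have hsub : ((N s').map ⟨Sum.inl, Sum.inl_injective⟩ ∪
          (Finset.univ.map ⟨Sum.inr, Sum.inr_injective⟩) : Finset (β ⊕ Fin d)) ⊆
          s.biUnion t := by
        intro z hz
        rcases Finset.mem_union.mp hz with hz | hz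
        · obtain ⟨y, hy, rfl⟩ := Finset.mem_map.mp hz
          obtain ⟨e, he, rfl⟩ := Finset.mem_image.mp hy
          have he' := Finset.mem_filter.mp he
          obtain ⟨x, hx, hxe⟩ := Finset.mem_image.mp he'.2
          refine Finset.mem_biUnion.mpr ⟨x, hx, ?_⟩
          apply Finset.mem_union_left
          apply Finset.mem_map_of_mem
          exact Finset.mem_image.mpr ⟨e, Finset.mem_filter.mpr ⟨he'.1, by simp [hxe]⟩, rfl⟩
        · obtain ⟨x, hx⟩ := hs
          refine Finset.mem_biUnion.mpr ⟨x, hx, Finset.mem_union_right _ hz⟩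
      have h2 := Finset.card_le_card hsub
      rw [Finset.card_union_of_disjoint (by
        simp only [Finset.disjoint_left]
        rintro z hz1 hz2
        obtain ⟨y, _, rfl⟩ := Finset.mem_map.mp hz1
        obtain ⟨j, _, hj⟩ := Finset.mem_map.mp hz2
        exact absurd hj (by simp))] at h2
      rw [Finset.card_map, Finset.card_map, Finset.card_univ, Fintype.card_fin] at h2
      have h3 := hdle s' hs'sub
      have h4 : s.card = s'.card :=
        (Finset.card_image_of_injective _ Subtype.val_injective).symm
      omega
  obtain ⟨f, hfinj, hft⟩ := (Finset.all_card_le_biUnion_card_iff_exists_injective t).mp hall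
  set L := (Finset.univ : Finset {x // x ∈ Xs}).filter (fun x => (f x).isLeft) with hL
  set Rt := (Finset.univ : Finset {x // x ∈ Xs}).filter (fun x => (f x).isRight) with hRt
  have hLRcard : L.card + Rt.card = Xs.card := by
    have : Rt = (Finset.univ : Finset {x // x ∈ Xs}).filter (fun x => ¬ (f x).isLeft) := by
      apply Finset.filter_congr
      intro x _
      simp [Sum.not_isLeft]
    rw [this, Finset.card_filter_add_card_filter_not, Finset.card_univ,
      Fintype.card_coe]
  have hRtcard : Rt.card ≤ d := by
    have hex : ∀ x ∈ Rt, ∃ j : Fin d, f x = Sum.inr j := by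
      intro x hx
      exact Sum.isRight_iff.mp (Finset.mem_filter.mp hx).2
    choose j hj using hex
    have : Rt.attach.card ≤ (Finset.univ : Finset (Fin d)).card := by
      apply Finset.card_le_card_of_injOn (fun x => j x.1 x.2) (fun _ _ => Finset.mem_univ _)
      intro a _ b _ hab
      have h5 : f a.1 = f b.1 := by
        rw [hj a.1 a.2, hj b.1 b.2]
        exact congrArg Sum.inr hab
      exact Subtype.ext (hfinj h5)
    simpa using this
  -- build matching
  have hLex : ∀ x ∈ L, ∃ y : β, f x = Sum.inl y := by
    intro x hx
    exact Sum.isLeft_iff.mp (Finset.mem_filter.mp hx).2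
  choose g hg using hLex
  set M := L.attach.image (fun x => ((x.1 : α), g x.1 x.2)) with hM
  have hMcard : M.card = L.card := by
    rw [Finset.card_image_of_injective, Finset.card_attach]
    intro a b hab
    have := congrArg Prod.fst hab
    exact Subtype.ext (Subtype.ext this)
  have hMR : M ⊆ R := by
    intro e he
    obtain ⟨x, _, rfl⟩ := Finset.mem_image.mp he
    have h1 := hft x.1
    rw [hg x.1 x.2] at h1
    rcases Finset.mem_union.mp h1 with h1 | h1
    · obtain ⟨y, hy, hy2⟩ := Finset.mem_map.mp h1
      have hyy : y = g x.1 x.2 := by simpa using hy2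
      rw [hyy] at hy
      obtain ⟨⟨a, b⟩, he, he2⟩ := Finset.mem_image.mp hy
      have he' := Finset.mem_filter.mp he
      have h3 : a = (x.1 : α) := by simpa using he'.2
      rw [← he2, ← h3]
      exact he'.1
    · obtain ⟨jj, _, hjj⟩ := Finset.mem_map.mp h1
      exact absurd hjj (by simp)
  have hMfst : ∀ e₁ ∈ M, ∀ e₂ ∈ M, e₁.1 = e₂.1 → e₁ = e₂ := by
    intro e₁ he₁ e₂ he₂ h
    obtain ⟨x₁, _, rfl⟩ := Finset.mem_image.mp he₁
    obtain ⟨x₂, _, rfl⟩ := Finset.mem_image.mp he₂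
    have : x₁ = x₂ := Subtype.ext (Subtype.ext h)
    rw [this]
  have hMsnd : ∀ e₁ ∈ M, ∀ e₂ ∈ M, e₁.2 = e₂.2 → e₁ = e₂ := by
    intro e₁ he₁ e₂ he₂ h
    obtain ⟨x₁, _, rfl⟩ := Finset.mem_image.mp he₁
    obtain ⟨x₂, _, rfl⟩ := Finset.mem_image.mp he₂
    simp only at h
    have : f x₁.1 = f x₂.1 := by rw [hg x₁.1 x₁.2, hg x₂.1 x₂.2, h]
    have : x₁ = x₂ := Subtype.ext (Subtype.ext (congrArg Subtype.val (hfinj this)))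
    rw [this]
  have hfinal := hm M hMR hMfst hMsnd
  refine ⟨Dx, Dy, Finset.sdiff_subset, ?_, by omega, hcover⟩
  exact (Finset.image_subset_image (Finset.filter_subset _ _))

lemma card_filter_product_fst {α β : Type*} [DecidableEq α] [DecidableEq β]
    (X : Finset α) (Y : Finset β) (pr : α → β → Prop) [∀ x y, Decidable (pr x y)] :
    ((X ×ˢ Y).filter fun z => pr z.1 z.2).card
      = ∑ x ∈ X, (Y.filter fun y => pr x y).card := by
  classical
  have hset : (X ×ˢ Y).filter (fun z => pr z.1 z.2)
      = X.biUnion (fun x => (Y.filter fun y => pr x y).image fun y => (x, y)) := by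
    ext ⟨a, b⟩
    simp only [Finset.mem_filter, Finset.mem_product, Finset.mem_biUnion, Finset.mem_image,
      Prod.mk.injEq]
    constructor
    · rintro ⟨⟨ha, hb⟩, hpr⟩
      exact ⟨a, ha, b, ⟨hb, hpr⟩, rfl, rfl⟩
    · rintro ⟨x, hx, y, ⟨hy, hpr⟩, rfl, rfl⟩
      exact ⟨⟨hx, hy⟩, hpr⟩
  rw [hset, Finset.card_biUnion]
  · apply Finset.sum_congr rfl
    intro x _
    exact Finset.card_image_of_injective _ (fun y₁ y₂ h => (Prod.ext_iff.mp h).2)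
  · intro x₁ _ x₂ _ hne
    simp only [Finset.disjoint_left, Finset.mem_image]
    rintro z ⟨y₁, _, rfl⟩ ⟨y₂, _, h⟩
    exact hne ((Prod.ext_iff.mp h).1).symm

lemma card_filter_product_snd {α β : Type*} [DecidableEq α] [DecidableEq β]
    (X : Finset α) (Y : Finset β) (pr : α → β → Prop) [∀ x y, Decidable (pr x y)] :
    ((X ×ˢ Y).filter fun z => pr z.1 z.2).card
      = ∑ y ∈ Y, (X.filter fun x => pr x y).card := by
  classical
  rw [← card_filter_product_fst Y X (fun y x => pr x y)]
  apply Finset.card_bij (fun z _ => (z.2, z.1))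
  · rintro ⟨a, b⟩ hz
    simp only [Finset.mem_filter, Finset.mem_product] at hz ⊢
    exact ⟨⟨hz.1.2, hz.1.1⟩, hz.2⟩
  · rintro ⟨a, b⟩ _ ⟨c, d⟩ _ h
    simpa [Prod.ext_iff, and_comm] using (Prod.ext_iff.mp h)
  · rintro ⟨a, b⟩ hz
    simp only [Finset.mem_filter, Finset.mem_product] at hz
    exact ⟨(b, a), by simp [Finset.mem_filter, Finset.mem_product, hz.1.1, hz.1.2, hz.2]⟩

/-- An `(n+p+2)`-closed balanced bipartite graph of order `2n` with
`k ≥ p ≥ 0`, `n ≥ 2k − p + 2` and `e(G) > n(n−k+p−1) + (k+2)(k−p+1)` contains a complete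
bipartite subgraph of order at least `2n − k + p`. -/
theorem stmt9 {V : Type*} [Fintype V] [DecidableEq V] (n k p : ℕ)
    (G : SimpleGraph V) [DecidableRel G.Adj] (X Y : Finset V)
    (hdisj : Disjoint X Y) (hcov : X ∪ Y = Finset.univ)
    (hX : X.card = n) (hY : Y.card = n)
    (hbip : ∀ u v, G.Adj u v → (u ∈ X ∧ v ∈ Y) ∨ (u ∈ Y ∧ v ∈ X))
    (hkp : p ≤ k) (hn : 2 * k + 2 ≤ n + p)
    (hclosed : ∀ x ∈ X, ∀ y ∈ Y, ¬ G.Adj x y →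
      G.degree x + G.degree y < n + p + 2)
    (he : (n : ℤ) * ((n : ℤ) - k + p - 1) + ((k : ℤ) + 2) * ((k : ℤ) - p + 1)
        < (G.edgeFinset.card : ℤ)) :
    ∃ A B : Finset V, A ⊆ X ∧ B ⊆ Y ∧ 2 * n + p ≤ A.card + B.card + k ∧
      ∀ a ∈ A, ∀ b ∈ B, G.Adj a b := by
  classical
  set q := k - p with hq
  set m := n - k - 2 with hm'
  have hq' : p + q = k := by omega
  have hm2 : k + 2 + m = n := by omega
  -- basic bipartite facts
  have hXY : ∀ x ∈ X, x ∉ Y := fun x hx hy => Finset.disjoint_left.mp hdisj hx hy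
  have hadjY : ∀ x ∈ X, ∀ v, G.Adj x v → v ∈ Y := by
    intro x hx v hadj
    rcases hbip x v hadj with ⟨_, h⟩ | ⟨h, _⟩
    · exact h
    · exact absurd h (hXY x hx)
  have hadjX : ∀ y ∈ Y, ∀ v, G.Adj y v → v ∈ X := by
    intro y hy v hadj
    rcases hbip y v hadj with ⟨h, _⟩ | ⟨_, h⟩
    · exact absurd hy (hXY y h)
    · exact h
  -- degree identities
  have hdegX : ∀ x ∈ X, G.degree x = (Y.filter (fun y => G.Adj x y)).card := by
    intro x hx
    rw [← SimpleGraph.card_neighborFinset_eq_degree]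
    congr 1
    ext v
    simp only [SimpleGraph.mem_neighborFinset, Finset.mem_filter]
    exact ⟨fun h => ⟨hadjY x hx v h, h⟩, fun h => h.2⟩
  have hdegY : ∀ y ∈ Y, G.degree y = (X.filter (fun x => G.Adj x y)).card := by
    intro y hy
    rw [← SimpleGraph.card_neighborFinset_eq_degree]
    congr 1
    ext v
    simp only [SimpleGraph.mem_neighborFinset, Finset.mem_filter]
    constructor
    · intro h
      exact ⟨hadjX y hy v h, h.symm⟩
    · intro h
      exact h.2.symm
  have hdefX : ∀ x ∈ X, G.degree x + (Y.filter fun y => ¬ G.Adj x y).card = n := by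
    intro x hx
    rw [hdegX x hx, Finset.card_filter_add_card_filter_not, hY]
  have hdefY : ∀ y ∈ Y, G.degree y + (X.filter fun x => ¬ G.Adj x y).card = n := by
    intro y hy
    rw [hdegY y hy, Finset.card_filter_add_card_filter_not, hX]
  -- the non-edge set
  set P := (X ×ˢ Y).filter (fun z => ¬ G.Adj z.1 z.2) with hP
  set E := (X ×ˢ Y).filter (fun z => G.Adj z.1 z.2) with hE
  have hPE : E.card + P.card = n * n := by
    rw [hE, hP, Finset.card_filter_add_card_filter_not, Finset.card_product, hX, hY]
  have hEX : E.card = ∑ x ∈ X, (Y.filter fun y => G.Adj x y).card :=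
    card_filter_product_fst X Y (fun x y => G.Adj x y)
  have hEY : E.card = ∑ y ∈ Y, (X.filter fun x => G.Adj x y).card :=
    card_filter_product_snd X Y (fun x y => G.Adj x y)
  have hEcard : E.card = G.edgeFinset.card := by
    have h2e := G.sum_degrees_eq_twice_card_edges
    have hsplit : ∑ v ∈ X, G.degree v + ∑ v ∈ Y, G.degree v = 2 * G.edgeFinset.card := by
      rw [← Finset.sum_union hdisj, hcov]
      exact h2e
    have h1 : ∑ v ∈ X, G.degree v = E.card := by
      rw [hEX]
      exact Finset.sum_congr rfl hdegX
    have h2 : ∑ v ∈ Y, G.degree v = E.card := by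
      rw [hEY]
      exact Finset.sum_congr rfl hdegY
    omega
  -- the key edge-count bound
  have hmu : P.card + 1 ≤ (q + 1) * m := by
    have h1 : ((E.card : ℤ)) + P.card = (n : ℤ) * n := by exact_mod_cast hPE
    have hqz : (q : ℤ) = (k : ℤ) - p := by omega
    have hmz : (m : ℤ) = (n : ℤ) - k - 2 := by omega
    have key : (n : ℤ) * ((n : ℤ) - k + p - 1) + ((k : ℤ) + 2) * ((k : ℤ) - p + 1)
        = (n : ℤ) * n - ((q : ℤ) + 1) * m := by
      rw [hqz, hmz]; ring
    rw [key, ← hEcard] at he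
    have : (P.card : ℤ) + 1 ≤ ((q : ℤ) + 1) * m := by linarith
    exact_mod_cast this
  -- closure in deficiency form
  have hdefsum : ∀ z ∈ P, m + q + 1 ≤
      (Y.filter fun y => ¬ G.Adj z.1 y).card + (X.filter fun x => ¬ G.Adj x z.2).card := by
    intro z hz
    obtain ⟨hmem, hna⟩ := Finset.mem_filter.mp hz
    obtain ⟨hx, hy⟩ := Finset.mem_product.mp hmem
    have h1 := hdefX z.1 hx
    have h2 := hdefY z.2 hy
    have h3 := hclosed z.1 hx z.2 hy hna
    omega
  -- no large matching in P
  have hnomatch : ∀ S ⊆ P, (∀ e₁ ∈ S, ∀ e₂ ∈ S, e₁.1 = e₂.1 → e₁ = e₂) →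
      (∀ e₁ ∈ S, ∀ e₂ ∈ S, e₁.2 = e₂.2 → e₁ = e₂) → S.card ≤ q := by
    intro S hSP hinj1 hinj2
    by_contra hbig
    push_neg at hbig
    obtain ⟨S', hS'sub, hS'card⟩ := Finset.exists_subset_card_eq hbig
    have hS'P : S' ⊆ P := hS'sub.trans hSP
    set Sx := S'.image Prod.fst with hSx
    set Sy := S'.image Prod.snd with hSy
    have hSxcard : Sx.card = q + 1 := by
      rw [hSx, Finset.card_image_of_injOn, hS'card]
      intro e₁ he₁ e₂ he₂ h
      exact hinj1 e₁ (hS'sub he₁) e₂ (hS'sub he₂) h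
    have hSycard : Sy.card = q + 1 := by
      rw [hSy, Finset.card_image_of_injOn, hS'card]
      intro e₁ he₁ e₂ he₂ h
      exact hinj2 e₁ (hS'sub he₁) e₂ (hS'sub he₂) h
    have hSxX : Sx ⊆ X := by
      intro a ha
      obtain ⟨e, he, rfl⟩ := Finset.mem_image.mp ha
      exact (Finset.mem_product.mp (Finset.mem_filter.mp (hS'P he)).1).1
    have hSyY : Sy ⊆ Y := by
      intro b hb
      obtain ⟨e, he, rfl⟩ := Finset.mem_image.mp hb
      exact (Finset.mem_product.mp (Finset.mem_filter.mp (hS'P he)).1).2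
    set P₁ := P.filter (fun z => z.1 ∈ Sx) with hP₁
    set P₂ := P.filter (fun z => z.1 ∉ Sx ∧ z.2 ∈ Sy) with hP₂
    have hP1card : P₁.card = ∑ x ∈ Sx, (Y.filter fun y => ¬ G.Adj x y).card := by
      have hset : P₁ = (Sx ×ˢ Y).filter (fun z => ¬ G.Adj z.1 z.2) := by
        ext ⟨a, b⟩
        simp only [hP₁, hP, Finset.mem_filter, Finset.mem_product]
        constructor
        · rintro ⟨⟨⟨_, hb⟩, hna⟩, ha⟩
          exact ⟨⟨ha, hb⟩, hna⟩
        · rintro ⟨⟨ha, hb⟩, hna⟩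
          exact ⟨⟨⟨hSxX ha, hb⟩, hna⟩, ha⟩
      rw [hset]
      exact card_filter_product_fst Sx Y (fun x y => ¬ G.Adj x y)
    have hP2card : P₂.card = ∑ y ∈ Sy, ((X \ Sx).filter fun x => ¬ G.Adj x y).card := by
      have hset : P₂ = ((X \ Sx) ×ˢ Sy).filter (fun z => ¬ G.Adj z.1 z.2) := by
        ext ⟨a, b⟩
        simp only [hP₂, hP, Finset.mem_filter, Finset.mem_product, Finset.mem_sdiff]
        tauto
      rw [hset]
      exact card_filter_product_snd (X \ Sx) Sy (fun x y => ¬ G.Adj x y)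
    have hdisj12 : Disjoint P₁ P₂ := by
      simp only [hP₁, hP₂, Finset.disjoint_left, Finset.mem_filter]
      tauto
    have hPP : P₁.card + P₂.card ≤ P.card := by
      rw [← Finset.card_union_of_disjoint hdisj12]
      exact Finset.card_le_card (Finset.union_subset (Finset.filter_subset _ _)
        (Finset.filter_subset _ _))
    have h7 : ∀ y ∈ Sy, (X.filter fun x => ¬ G.Adj x y).card ≤
        ((X \ Sx).filter fun x => ¬ G.Adj x y).card + (q + 1) := by
      intro y hy
      have hsub : X.filter (fun x => ¬ G.Adj x y) ⊆
          ((X \ Sx).filter fun x => ¬ G.Adj x y) ∪ Sx := by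
        intro x hx
        simp only [Finset.mem_filter, Finset.mem_union, Finset.mem_sdiff] at hx ⊢
        tauto
      calc (X.filter fun x => ¬ G.Adj x y).card
          ≤ (((X \ Sx).filter fun x => ¬ G.Adj x y) ∪ Sx).card := Finset.card_le_card hsub
        _ ≤ ((X \ Sx).filter fun x => ¬ G.Adj x y).card + Sx.card := Finset.card_union_le _ _
        _ = ((X \ Sx).filter fun x => ¬ G.Adj x y).card + (q + 1) := by rw [hSxcard]
    have h8 : ∑ y ∈ Sy, (X.filter fun x => ¬ G.Adj x y).card
        ≤ P₂.card + (q + 1) * (q + 1) := by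
      calc ∑ y ∈ Sy, (X.filter fun x => ¬ G.Adj x y).card
          ≤ ∑ y ∈ Sy, (((X \ Sx).filter fun x => ¬ G.Adj x y).card + (q + 1)) :=
            Finset.sum_le_sum h7
        _ = P₂.card + (q + 1) * (q + 1) := by
            rw [Finset.sum_add_distrib, Finset.sum_const, hSycard, hP2card, smul_eq_mul]
    have h9 : (q + 1) * (m + q + 1) ≤
        ∑ x ∈ Sx, (Y.filter fun y => ¬ G.Adj x y).card
          + ∑ y ∈ Sy, (X.filter fun x => ¬ G.Adj x y).card := by
      calc (q + 1) * (m + q + 1) = ∑ _z ∈ S', (m + q + 1) := by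
            rw [Finset.sum_const, hS'card, smul_eq_mul]
        _ ≤ ∑ z ∈ S', ((Y.filter fun y => ¬ G.Adj z.1 y).card
              + (X.filter fun x => ¬ G.Adj x z.2).card) :=
            Finset.sum_le_sum (fun z hz => hdefsum z (hS'P hz))
        _ = ∑ x ∈ Sx, (Y.filter fun y => ¬ G.Adj x y).card
              + ∑ y ∈ Sy, (X.filter fun x => ¬ G.Adj x y).card := by
            rw [Finset.sum_add_distrib, hSx, hSy,
              Finset.sum_image (fun e₁ he₁ e₂ he₂ h => hinj1 e₁ (hS'sub he₁) e₂ (hS'sub he₂) h),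
              Finset.sum_image (fun e₁ he₁ e₂ he₂ h => hinj2 e₁ (hS'sub he₁) e₂ (hS'sub he₂) h)]
    have hexpand : (q + 1) * (m + q + 1) = (q + 1) * m + (q + 1) * (q + 1) := by ring
    linarith [hP1card, hmu]
  -- apply König
  obtain ⟨Dx, Dy, hDxs, hDys, hDcard, hcover⟩ := koenig_cover q P hnomatch
  have hDxX : Dx ⊆ X := by
    refine hDxs.trans ?_
    intro a ha
    obtain ⟨e, he, rfl⟩ := Finset.mem_image.mp ha
    exact (Finset.mem_product.mp (Finset.mem_filter.mp he).1).1
  have hDyY : Dy ⊆ Y := by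
    refine hDys.trans ?_
    intro b hb
    obtain ⟨e, he, rfl⟩ := Finset.mem_image.mp hb
    exact (Finset.mem_product.mp (Finset.mem_filter.mp he).1).2
  refine ⟨X \ Dx, Y \ Dy, Finset.sdiff_subset, Finset.sdiff_subset, ?_, ?_⟩
  · have h1 : (X \ Dx).card = n - Dx.card := by rw [Finset.card_sdiff_of_subset hDxX, hX]
    have h2 : (Y \ Dy).card = n - Dy.card := by rw [Finset.card_sdiff_of_subset hDyY, hY]
    have h3 : Dx.card ≤ n := hX ▸ Finset.card_le_card hDxX
    have h4 : Dy.card ≤ n := hY ▸ Finset.card_le_card hDyY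
    omega
  · intro a ha b hb
    by_contra hna
    have haX := (Finset.mem_sdiff.mp ha).1
    have hbY := (Finset.mem_sdiff.mp hb).1
    have : (a, b) ∈ P :=
      Finset.mem_filter.mpr ⟨Finset.mem_product.mpr ⟨haX, hbY⟩, hna⟩
    rcases hcover (a, b) this with h | h
    · exact (Finset.mem_sdiff.mp ha).2 h
    · exact (Finset.mem_sdiff.mp hb).2 h
end

section
/- Let G be an (n+p+2)-closed balanced bipartite graph of order 2n with parts of size n, minimum degree δ(G) ≥ k, where k ≥ p ≥ 0 and n ≥ 2k − p + 2. If e(G) > n(n−k+p−1) + (k+2)(k−p+1), then K_{n,n−k+p} is a subgraph of G, or k = p + 2 and G is isomorphic to N_{n,n}^{p,1} or N_{n,n}^{p,2}. -/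
/-- Bipartite graph on `α ⊕ β` determined by a cross relation. -/
def crossGraph {α β : Type*} (r : α → β → Prop) : SimpleGraph (α ⊕ β) where
  Adj u v := match u, v with
    | Sum.inl i, Sum.inr j => r i j
    | Sum.inr j, Sum.inl i => r i j
    | _, _ => False
  symm := ⟨by rintro (i|i) (j|j) h <;> first | exact h.elim | exact h⟩
  loopless := ⟨by rintro (i|i) h <;> exact h⟩

/-- Block class of an index: `1` for the first `a` indices, `2` for the next `b`, else `3`. -/
def nClass (a b : ℕ) (i : ℕ) : ℕ := if i < a then 1 else if i < a + b then 2 else 3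

/-- The graph `N_{n,n}^{p,1}`: blocks of sizes `n-p-2`, `p+1`, `1` on each side; a cross pair
is adjacent unless its classes are `{1,3}`. -/
def Ngraph1 (n p : ℕ) : SimpleGraph (Fin n ⊕ Fin n) :=
  crossGraph (fun i j =>
    ¬(nClass (n-p-2) (p+1) (i:ℕ) = 1 ∧ nClass (n-p-2) (p+1) (j:ℕ) = 3) ∧
    ¬(nClass (n-p-2) (p+1) (i:ℕ) = 3 ∧ nClass (n-p-2) (p+1) (j:ℕ) = 1))

/-- The graph `N_{n,n}^{p,2}`: blocks of sizes `n-p-3`, `p+2`, `1` on each side; a cross pair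
is adjacent unless its classes are `{1,3}` or `{3,3}`. -/
def Ngraph2 (n p : ℕ) : SimpleGraph (Fin n ⊕ Fin n) :=
  crossGraph (fun i j =>
    ¬(nClass (n-p-3) (p+2) (i:ℕ) = 1 ∧ nClass (n-p-3) (p+2) (j:ℕ) = 3) ∧
    ¬(nClass (n-p-3) (p+2) (i:ℕ) = 3 ∧ nClass (n-p-3) (p+2) (j:ℕ) = 1) ∧
    ¬(nClass (n-p-3) (p+2) (i:ℕ) = 3 ∧ nClass (n-p-3) (p+2) (j:ℕ) = 3))

/-! Write `n = k + a + 2` and `k = p + t`, and call `n - d(v)` the deficit of a vertex `v`. The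
edge bound says that the deficits on either side sum to less than `a (t + 1)`, and closedness says
that the deficits of a non-adjacent pair sum to at least `a + t + 1`. If at most `t` vertices of one
side are incomplete, the complete ones give `K_{n,n-t}`. Otherwise a weighted count shows that no
deficit lies strictly between `t` and `a + 1`, so every non-edge meets a vertex of deficit `> a`;
counting the non-neighbours of such vertices forces `t = 2` and exactly one vertex of deficit `> a`
on each side, of deficit `a + 2`. All non-edges then meet these two vertices `x₀, y₀`, which
determines `G` up to isomorphism: it is `N^{p,1}` or `N^{p,2}` according as `x₀ y₀` is an edge. -/

open Finset

section

open SimpleGraph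

lemma Finset.card_mul_le_sum_of_subset {ι : Type*} {s t : Finset ι} {f : ι → ℕ} {c : ℕ}
    (hts : t ⊆ s) (h : ∀ i ∈ t, c ≤ f i) : #t * c ≤ ∑ i ∈ s, f i :=
  calc #t * c ≤ ∑ i ∈ t, f i := by simpa using card_nsmul_le_sum t f c h
    _ ≤ ∑ i ∈ s, f i := sum_le_sum_of_subset hts

lemma eq_two_and_eq_one_of_mul_add_lt {a t b : ℕ} (hta : t ≤ a) (ht : 2 ≤ t) (hb : 0 < b)
    (htb : t ≤ b + 1) (h : b * (a + 1) + (a + 1 - b) * (t - 1) < a * (t + 1)) :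
    t = 2 ∧ b = 1 := by
  rcases le_or_gt b (a + 1) with hba | hba
  · obtain ⟨e, he⟩ := Nat.exists_eq_add_of_le hba
    obtain ⟨s, rfl⟩ := Nat.exists_eq_add_of_le ht
    rw [he, show b + e - b = e by omega, show 2 + s - 1 = s + 1 by omega] at h
    rcases Nat.eq_zero_or_pos s with rfl | hs
    · constructor <;> nlinarith
    · nlinarith
  · nlinarith

section Blocks

lemma Fintype.card_subtype_coe_finset {V : Type*} (A : Finset V) (q : V → Prop)
    [DecidablePred q] : Fintype.card {a : A // q a} = #(A.filter q) := by
  rw [← Fintype.card_coe (A.filter q)]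
  exact Fintype.card_congr ((Equiv.subtypeSubtypeEquivSubtypeInter (· ∈ A) q).trans
    (Equiv.subtypeEquivRight fun _ => mem_filter.symm))

lemma nClass_sum_fin_castLE (c : Fin 3 → ℕ) (i : Fin 3) {j : ℕ} (hj : j < c i) :
    nClass (c 0) (c 1) (∑ k : Fin i, c (Fin.castLE i.2.le k) + j) = i + 1 := by
  obtain ⟨_ | _ | _ | m, hi⟩ := i <;> simp [Fin.sum_univ_succ, nClass] at hj ⊢ <;> omega

theorem exists_equiv_fin_nClass {α : Type*} [Fintype α] (cls : α → Fin 3) {c₁ c₂ c₃ : ℕ}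
    (h₀ : Fintype.card {a // cls a = 0} = c₁) (h₂ : Fintype.card {a // cls a = 2} = c₃)
    (hα : Fintype.card α = c₁ + c₂ + c₃) :
    ∃ e : α ≃ Fin (c₁ + c₂ + c₃), ∀ a, nClass c₁ c₂ (e a) = cls a + 1 := by
  have hsum : ∑ i, Fintype.card {a // cls a = i} = Fintype.card α := by
    rw [← Fintype.card_sigma]
    exact Fintype.card_congr (Equiv.sigmaFiberEquiv cls)
  rw [Fin.sum_univ_three] at hsum
  have h₁ : Fintype.card {a // cls a = 1} = c₂ := by omega
  let e : α ≃ Fin (∑ i, Fintype.card {a // cls a = i}) := (Equiv.sigmaFiberEquiv cls).symm.trans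
    ((Equiv.sigmaCongrRight fun i => Fintype.equivFin _).trans finSigmaFinEquiv)
  refine ⟨e.trans (finCongr (by rw [Fin.sum_univ_three]; omega)), fun a => ?_⟩
  simp only [e, Equiv.trans_apply, finCongr_apply, Fin.val_cast, Equiv.sigmaCongrRight_apply,
    finSigmaFinEquiv_apply]
  rw [← h₀, ← h₁]
  exact nClass_sum_fin_castLE (fun i => Fintype.card {a // cls a = i}) _ (Fin.isLt _)

variable {V : Type*} [DecidableEq V]

/-- With `c = x₀` and `d = y₀`, the classes `0, 1, 2` are the blocks `X₁, X₂, X₃` of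
`N_{n,n}^{p,i}`: the non-neighbours of `y₀` other than `x₀`, its other neighbours, and `{x₀}`. -/
def centerClass (G : SimpleGraph V) [DecidableRel G.Adj] (c d v : V) : Fin 3 :=
  if v = c then 2 else if G.Adj d v then 1 else 0

theorem exists_equiv_fin_centerClass [Fintype V] (G : SimpleGraph V) [DecidableRel G.Adj]
    {A : Finset V} {c : V} (hc : c ∈ A) (d : V) {c₁ c₂ N : ℕ}
    (h₀ : #((A \ G.neighborFinset d).erase c) = c₁) (hA : #A = N) (hN : c₁ + c₂ + 1 = N) :
    ∃ e : A ≃ Fin N, ∀ v : A, nClass c₁ c₂ (e v) = centerClass G c d v + 1 := by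
  have hcls₀ : A.filter (centerClass G c d · = 0) = (A \ G.neighborFinset d).erase c := by
    ext v
    rw [mem_filter]
    simp only [mem_erase, mem_sdiff, mem_neighborFinset, centerClass]
    split_ifs <;> simp_all
  have hcls₂ : A.filter (centerClass G c d · = 2) = {c} := by
    ext v
    rw [mem_filter]
    simp only [mem_singleton, centerClass]
    split_ifs <;> simp_all
  obtain ⟨e, he⟩ := exists_equiv_fin_nClass (fun v : A => centerClass G c d v) (c₂ := c₂)
    (by rw [Fintype.card_subtype_coe_finset A (centerClass G c d · = 0), hcls₀, h₀])
    (by rw [Fintype.card_subtype_coe_finset A (centerClass G c d · = 2), hcls₂, card_singleton])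
    (by rw [Fintype.card_coe, hA, hN])
  exact ⟨e.trans (finCongr hN), he⟩

end Blocks

namespace SimpleGraph.IsBipartiteWith

variable {V : Type*} [Fintype V] {G : SimpleGraph V} {X Y : Finset V}

section

variable [DecidableRel G.Adj]

lemma exists_subset_card_eq_forall_adj (hG : G.IsBipartiteWith X Y) {m : ℕ}
    (hm : #(Y.filter (G.degree · < #X)) + m ≤ #Y) :
    ∃ B ⊆ Y, #B = m ∧ ∀ x ∈ X, ∀ b ∈ B, G.Adj x b := by
  obtain ⟨B, hBY, hB⟩ := exists_subset_card_eq (s := Y.filter (#X ≤ G.degree ·)) (n := m) (by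
    have := card_filter_add_card_filter_not (s := Y) (#X ≤ G.degree ·)
    simp only [not_le] at this
    omega)
  refine ⟨B, hBY.trans (filter_subset _ _), hB, fun x hx b hb => ?_⟩
  obtain ⟨hbY, hdeg⟩ := mem_filter.mp (hBY hb)
  have hnbr : G.neighborFinset b = X := eq_of_subset_of_card_le
    (isBipartiteWith_neighborFinset_subset' hG hbY) (by rwa [card_neighborFinset_eq_degree])
  exact ((G.mem_neighborFinset b x).mp (hnbr ▸ hx)).symm

end

variable [DecidableEq V]

theorem nonempty_iso_crossGraph {α β : Type*} (hG : G.IsBipartiteWith X Y) (hcov : X ∪ Y = univ)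
    (r : α → β → Prop) (eX : X ≃ α) (eY : Y ≃ β)
    (h : ∀ (x : X) (y : Y), G.Adj x y ↔ r (eX x) (eY y)) : Nonempty (G ≃g crossGraph r) := by
  have hY : ∀ v, v ∉ X ↔ v ∈ Y := fun v =>
    ⟨fun hv => (mem_union.mp (hcov ▸ mem_univ v)).resolve_left hv,
      fun hv hx => hG.disjoint.notMem_of_mem_left hx hv⟩
  let e : V ≃ α ⊕ β := (Equiv.sumCompl (· ∈ X)).symm.trans
    (Equiv.sumCongr eX ((Equiv.subtypeEquivRight hY).trans eY))
  refine ⟨⟨e, fun {u v} => ?_⟩⟩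
  by_cases hu : u ∈ X <;> by_cases hv : v ∈ X
  · simp [e, Equiv.sumCompl_symm_apply_of_pos hu, Equiv.sumCompl_symm_apply_of_pos hv, crossGraph]
    exact fun hadj => (hY v).mpr (hG.mem_of_mem_adj hu hadj) hv
  · simp [e, Equiv.sumCompl_symm_apply_of_pos hu, Equiv.sumCompl_symm_apply_of_neg hv, crossGraph]
    exact (h ⟨u, hu⟩ ⟨v, (hY v).mp hv⟩).symm
  · simp [e, Equiv.sumCompl_symm_apply_of_neg hu, Equiv.sumCompl_symm_apply_of_pos hv, crossGraph]
    exact (h ⟨v, hv⟩ ⟨u, (hY u).mp hu⟩).symm.trans (G.adj_comm _ _)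
  · simp [e, Equiv.sumCompl_symm_apply_of_neg hu, Equiv.sumCompl_symm_apply_of_neg hv, crossGraph]
    exact fun hadj => hv (hG.symm.mem_of_mem_adj ((hY u).mp hu) hadj)

variable [DecidableRel G.Adj]

lemma card_sdiff_neighborFinset (hG : G.IsBipartiteWith X Y) {x : V} (hx : x ∈ X) :
    #(Y \ G.neighborFinset x) = #Y - G.degree x := by
  rw [card_sdiff_of_subset (isBipartiteWith_neighborFinset_subset hG hx),
    card_neighborFinset_eq_degree]

variable {n p m : ℕ} {xs ys : V}

theorem nonempty_iso_crossGraph_nClass (hG : G.IsBipartiteWith X Y)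
    (hcov : X ∪ Y = univ) (hX : #X = n) (hY : #Y = n) (hxs : xs ∈ X) (hys : ys ∈ Y)
    {c₁ c₂ : ℕ} (hX₀ : #((X \ G.neighborFinset ys).erase xs) = c₁)
    (hY₀ : #((Y \ G.neighborFinset xs).erase ys) = c₁) (hn : c₁ + c₂ + 1 = n) (R : ℕ → ℕ → Prop)
    (hR : ∀ x ∈ X, ∀ y ∈ Y,
      G.Adj x y ↔ R (centerClass G xs ys x + 1) (centerClass G ys xs y + 1)) :
    Nonempty (G ≃g crossGraph fun i j : Fin n => R (nClass c₁ c₂ i) (nClass c₁ c₂ j)) := by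
  obtain ⟨eX, heX⟩ := exists_equiv_fin_centerClass G hxs ys hX₀ hX hn
  obtain ⟨eY, heY⟩ := exists_equiv_fin_centerClass G hys xs hY₀ hY hn
  refine hG.nonempty_iso_crossGraph hcov _ eX eY fun x y => ?_
  rw [heX, heY]
  exact hR x x.2 y y.2

theorem nonempty_iso_Ngraph1 (hG : G.IsBipartiteWith X Y)
    (hcov : X ∪ Y = univ) (hX : #X = n) (hY : #Y = n) (hxs : xs ∈ X) (hys : ys ∈ Y)
    (hnonadj : ∀ x ∈ X, ∀ y ∈ Y, ¬G.Adj x y → x = xs ∨ y = ys) (hadj : G.Adj xs ys)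
    (hdx : n - G.degree xs = m) (hdy : n - G.degree ys = m) (hn : m + p + 2 = n) :
    Nonempty (G ≃g Ngraph1 n p) := by
  have hX₀ : #((X \ G.neighborFinset ys).erase xs) = n - p - 2 := by
    rw [erase_eq_of_notMem (by simp [hadj.symm]), hG.symm.card_sdiff_neighborFinset hys, hX]
    omega
  have hY₀ : #((Y \ G.neighborFinset xs).erase ys) = n - p - 2 := by
    rw [erase_eq_of_notMem (by simp [hadj]), hG.card_sdiff_neighborFinset hxs, hY]
    omega
  refine hG.nonempty_iso_crossGraph_nClass hcov hX hY hxs hys hX₀ hY₀ (by omega)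
    (fun u w => ¬(u = 1 ∧ w = 3) ∧ ¬(u = 3 ∧ w = 1)) fun x hx y hy => ?_
  have := hnonadj x hx y hy
  by_cases hx' : x = xs <;> by_cases hy' : y = ys <;>
    simp [centerClass, hx', hy', hadj, G.adj_comm x ys]
  all_goals split_ifs <;> simp_all

theorem nonempty_iso_Ngraph2 (hG : G.IsBipartiteWith X Y)
    (hcov : X ∪ Y = univ) (hX : #X = n) (hY : #Y = n) (hxs : xs ∈ X) (hys : ys ∈ Y)
    (hnonadj : ∀ x ∈ X, ∀ y ∈ Y, ¬G.Adj x y → x = xs ∨ y = ys) (hadj : ¬G.Adj xs ys)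
    (hdx : n - G.degree xs = m) (hdy : n - G.degree ys = m) (hn : m + p + 2 = n) :
    Nonempty (G ≃g Ngraph2 n p) := by
  have hxs' : xs ∈ X \ G.neighborFinset ys := by simpa [hxs] using fun h => hadj h.symm
  have hys' : ys ∈ Y \ G.neighborFinset xs := by simpa [hys] using hadj
  have hm := card_pos.mpr ⟨xs, hxs'⟩
  rw [hG.symm.card_sdiff_neighborFinset hys, hX] at hm
  have hX₀ : #((X \ G.neighborFinset ys).erase xs) = n - p - 3 := by
    rw [card_erase_of_mem hxs', hG.symm.card_sdiff_neighborFinset hys, hX]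
    omega
  have hY₀ : #((Y \ G.neighborFinset xs).erase ys) = n - p - 3 := by
    rw [card_erase_of_mem hys', hG.card_sdiff_neighborFinset hxs, hY]
    omega
  refine hG.nonempty_iso_crossGraph_nClass hcov hX hY hxs hys hX₀ hY₀ (by omega)
    (fun u w => ¬(u = 1 ∧ w = 3) ∧ ¬(u = 3 ∧ w = 1) ∧ ¬(u = 3 ∧ w = 3)) fun x hx y hy => ?_
  have := hnonadj x hx y hy
  by_cases hx' : x = xs <;> by_cases hy' : y = ys <;>
    simp [centerClass, hx', hy', hadj, G.adj_comm x ys]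
  all_goals split_ifs <;> simp_all

end SimpleGraph.IsBipartiteWith

variable {V : Type*} [Fintype V] {G : SimpleGraph V} [DecidableRel G.Adj] {X Y : Finset V}
  {n a t : ℕ}

/-- `n - G.degree v` counts the non-neighbours of `v` in the opposite part. Writing `n = k + a + 2`
and `k = p + t`, the fields are the hypotheses of `stmt10`: closedness, `δ(G) ≥ k`, and the edge
bound, which says that there are fewer than `a (t + 1)` non-edges. -/
structure DenseClosed (G : SimpleGraph V) [DecidableRel G.Adj] (X Y : Finset V) (n a t : ℕ) :
    Prop where
  isBipartiteWith : G.IsBipartiteWith X Y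
  card_left : #X = n
  card_right : #Y = n
  t_le_a : t ≤ a
  deficit_le : ∀ v, n - G.degree v ≤ a + 2
  closed : ∀ x ∈ X, ∀ y ∈ Y, ¬G.Adj x y → a + t + 1 ≤ (n - G.degree x) + (n - G.degree y)
  sum_left_lt : ∑ x ∈ X, (n - G.degree x) < a * (t + 1)
  sum_right_lt : ∑ y ∈ Y, (n - G.degree y) < a * (t + 1)

def bigDeficit (G : SimpleGraph V) [DecidableRel G.Adj] (X : Finset V) (n a : ℕ) : Finset V :=
  X.filter (a < n - G.degree ·)

@[simp]
lemma mem_bigDeficit {v : V} : v ∈ bigDeficit G X n a ↔ v ∈ X ∧ a < n - G.degree v :=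
  mem_filter

namespace DenseClosed

lemma of_degree (hG : G.IsBipartiteWith X Y) (hX : #X = n) (hY : #Y = n) (hta : t ≤ a)
    (hδ : ∀ v, n ≤ G.degree v + a + 2)
    (hclosed : ∀ x ∈ X, ∀ y ∈ Y, ¬G.Adj x y → G.degree x + G.degree y + a + t < 2 * n)
    (he : n * n < #G.edgeFinset + a * (t + 1)) : DenseClosed G X Y n a t := by
  have hsum : ∀ {s s' : Finset V}, G.IsBipartiteWith s s' → #s' = n →
      ∑ v ∈ s, (n - G.degree v) + #G.edgeFinset = #s * n := fun {s s'} h hs' => by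
    rw [sum_tsub_distrib _ fun v hv => hs' ▸ isBipartiteWith_degree_le h hv, sum_const,
      smul_eq_mul, ← isBipartiteWith_sum_degrees_eq_card_edges h]
    have : ∑ v ∈ s, G.degree v ≤ #s * n := by
      simpa using sum_le_card_nsmul s _ n fun v hv => hs' ▸ isBipartiteWith_degree_le h hv
    omega
  have hXs := hsum hG hY
  have hYs := hsum hG.symm hX
  refine ⟨hG, hX, hY, hta, fun v => by have := hδ v; omega, fun x hx y hy hxy => ?_, by
    rw [hX] at hXs; omega, by rw [hY] at hYs; omega⟩
  have := hclosed x hx y hy hxy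
  have := isBipartiteWith_degree_le hG hx
  have := isBipartiteWith_degree_le' hG hy
  omega

variable (S : DenseClosed G X Y n a t)
include S

lemma symm : DenseClosed G Y X n a t where
  isBipartiteWith := S.isBipartiteWith.symm
  card_left := S.card_right
  card_right := S.card_left
  t_le_a := S.t_le_a
  deficit_le := S.deficit_le
  closed y hy x hx hxy := by have := S.closed x hx y hy fun h => hxy h.symm; omega
  sum_left_lt := S.sum_right_lt
  sum_right_lt := S.sum_left_lt

lemma card_bigDeficit_le : #(bigDeficit G X n a) ≤ t := by
  have h : #(bigDeficit G X n a) * (a + 1) ≤ ∑ x ∈ X, (n - G.degree x) :=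
    card_mul_le_sum_of_subset (filter_subset _ X) fun x hx => (mem_bigDeficit.mp hx).2
  have := S.sum_left_lt
  by_contra! ht
  nlinarith [Nat.mul_le_mul_right (a + 1) ht]

variable [DecidableEq V]

lemma card_sdiff_neighborFinset {x : V} (hx : x ∈ X) :
    #(Y \ G.neighborFinset x) = n - G.degree x := by
  rw [S.isBipartiteWith.card_sdiff_neighborFinset hx, S.card_right]

lemma exists_not_adj {x : V} (hx : x ∈ X) (h : 0 < n - G.degree x) : ∃ y ∈ Y, ¬G.Adj x y := by
  obtain ⟨y, hy⟩ := card_pos.mp (S.card_sdiff_neighborFinset hx ▸ h)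
  simp only [mem_sdiff, mem_neighborFinset] at hy
  exact ⟨y, hy⟩

/-- If the deficit `m` of `x` were strictly between `t` and `a + 1`, its `m` non-neighbours would
carry a total deficit of at least `m (a + t + 1 - m) ≥ a (t + 1)`. -/
lemma deficit_le_or_lt {x : V} (hx : x ∈ X) : n - G.degree x ≤ t ∨ a < n - G.degree x := by
  by_contra! h
  have hsum : #(Y \ G.neighborFinset x) * (a + t + 1 - (n - G.degree x)) ≤
      ∑ y ∈ Y, (n - G.degree y) :=
    card_mul_le_sum_of_subset sdiff_subset fun y hy => by
      simp only [mem_sdiff, mem_neighborFinset] at hy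
      have := S.closed x hx y hy.1 hy.2
      omega
  rw [S.card_sdiff_neighborFinset hx] at hsum
  have key : ∀ m, t < m → m ≤ a → a * (t + 1) ≤ m * (a + t + 1 - m) := by
    intro m htm hma
    obtain ⟨c, rfl⟩ := Nat.exists_eq_add_of_lt htm
    obtain ⟨d, rfl⟩ := Nat.exists_eq_add_of_le hma
    rw [show t + c + 1 + d + t + 1 - (t + c + 1) = d + t + 1 by omega]
    nlinarith
  have := key _ h.1 h.2
  have := S.sum_right_lt
  omega

lemma pos_deficit_of_not_adj {x y : V} (hx : x ∈ X) (hy : y ∈ Y) (hxy : ¬G.Adj x y) :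
    0 < n - G.degree y := by
  rw [← S.symm.card_sdiff_neighborFinset hy]
  exact card_pos.mpr ⟨x, by simpa [hx] using fun h => hxy h.symm⟩

lemma lt_deficit_or_lt_deficit_of_not_adj {x y : V} (hx : x ∈ X) (hy : y ∈ Y) (hxy : ¬G.Adj x y) :
    a < n - G.degree x ∨ a < n - G.degree y := by
  have := S.closed x hx y hy hxy
  have := S.deficit_le_or_lt hx
  have := S.symm.deficit_le_or_lt hy
  have := S.t_le_a
  omega

lemma sdiff_neighborFinset_subset_bigDeficit {y : V} (hy : y ∈ Y) (ht : n - G.degree y ≤ t) :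
    X \ G.neighborFinset y ⊆ bigDeficit G X n a := fun x hx => by
  simp only [mem_sdiff, mem_neighborFinset] at hx
  have := S.lt_deficit_or_lt_deficit_of_not_adj hx.1 hy fun h => hx.2 h.symm
  exact mem_bigDeficit.mpr ⟨hx.1, by have := S.t_le_a; omega⟩

lemma exists_mem_deficit_le (hW : t < #(Y.filter (G.degree · < n))) :
    ∃ y ∈ Y, 0 < n - G.degree y ∧ n - G.degree y ≤ t := by
  obtain ⟨y, hyW, hyB⟩ := exists_mem_notMem_of_card_lt_card (S.symm.card_bigDeficit_le.trans_lt hW)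
  obtain ⟨hy, hdeg⟩ := mem_filter.mp hyW
  have := S.symm.deficit_le_or_lt hy
  simp only [mem_bigDeficit, not_and, not_lt] at hyB
  exact ⟨y, hy, by omega, by have := hyB hy; omega⟩

lemma bigDeficit_nonempty_and_le_card {y : V} (hy : y ∈ Y) (h0 : 0 < n - G.degree y)
    (ht : n - G.degree y ≤ t) :
    (bigDeficit G X n a).Nonempty ∧ t ≤ #(bigDeficit G X n a) + 1 := by
  have hsub := S.sdiff_neighborFinset_subset_bigDeficit hy ht
  have hcard := card_le_card hsub
  rw [S.symm.card_sdiff_neighborFinset hy] at hcard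
  obtain ⟨x, hx, hxy⟩ := S.symm.exists_not_adj hy h0
  have := S.symm.closed y hy x hx hxy
  have := S.deficit_le x
  exact ⟨card_pos.mp (by omega), by omega⟩

/-- The `≥ a + 1` non-neighbours of `y` have deficit at least `t - 1`, and at least
`a + 1 - #(bigDeficit G X n a)` of them lie outside `bigDeficit G X n a`. -/
lemma card_bigDeficit_mul_add_le {y : V} (hy : y ∈ Y) (hbig : a < n - G.degree y) :
    #(bigDeficit G X n a) * (a + 1) + (a + 1 - #(bigDeficit G X n a)) * (t - 1) ≤
      ∑ x ∈ X, (n - G.degree x) := by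
  set B := bigDeficit G X n a
  set T := X \ G.neighborFinset y
  have hB : #B * (a + 1) ≤ ∑ x ∈ B, (n - G.degree x) :=
    card_mul_le_sum_of_subset subset_rfl fun x hx => (mem_bigDeficit.mp hx).2
  have hT : #(T \ B) * (t - 1) ≤ ∑ x ∈ T \ B, (n - G.degree x) :=
    card_mul_le_sum_of_subset subset_rfl fun x hx => by
      simp only [T, mem_sdiff, mem_neighborFinset] at hx
      have := S.closed x hx.1.1 y hy fun h => hx.1.2 h.symm
      have := S.deficit_le y
      omega
  have hTB : a + 1 - #B ≤ #(T \ B) := by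
    have := le_card_sdiff B T
    have : #T = n - G.degree y := S.symm.card_sdiff_neighborFinset hy
    omega
  have hsub : B ∪ (T \ B) ⊆ X := union_subset (filter_subset _ X) (sdiff_subset.trans sdiff_subset)
  have := sum_le_sum_of_subset (f := fun x => n - G.degree x) hsub
  rw [sum_union disjoint_sdiff] at this
  nlinarith [Nat.mul_le_mul_right (t - 1) hTB]

/-- The `≥ a + 1` non-neighbours of `x` all have positive deficit. -/
lemma two_mul_add_one_le_sum {x y : V} (hx : x ∈ bigDeficit G X n a)
    (hy : y ∈ bigDeficit G Y n a) : 2 * a + 1 ≤ ∑ v ∈ Y, (n - G.degree v) := by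
  rw [mem_bigDeficit] at hx hy
  set T := Y \ G.neighborFinset x
  have hT : #(T.erase y) * 1 ≤ ∑ v ∈ Y.erase y, (n - G.degree v) :=
    card_mul_le_sum_of_subset (erase_subset_erase y sdiff_subset) fun v hv => by
      simp only [T, mem_erase, mem_sdiff, mem_neighborFinset] at hv
      exact S.pos_deficit_of_not_adj hx.1 hv.2.1 hv.2.2
  have := pred_card_le_card_erase (s := T) (a := y)
  have : #T = n - G.degree x := S.card_sdiff_neighborFinset hx.1
  rw [← add_sum_erase Y _ hy.1]
  omega

lemma eq_two_and_card_bigDeficit_eq_one (hWX : t < #(X.filter (G.degree · < n)))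
    (hWY : t < #(Y.filter (G.degree · < n))) : t = 2 ∧ #(bigDeficit G X n a) = 1 := by
  obtain ⟨y, hy, hy0, hyt⟩ := S.exists_mem_deficit_le hWY
  obtain ⟨x, hx, hx0, hxt⟩ := S.symm.exists_mem_deficit_le hWX
  obtain ⟨⟨x₁, hx₁⟩, hBX⟩ := S.bigDeficit_nonempty_and_le_card hy hy0 hyt
  obtain ⟨⟨y₁, hy₁⟩, -⟩ := S.symm.bigDeficit_nonempty_and_le_card hx hx0 hxt
  have ht : 2 ≤ t := by
    have := S.two_mul_add_one_le_sum hx₁ hy₁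
    have := S.sum_right_lt
    by_contra! ht
    nlinarith
  rw [mem_bigDeficit] at hy₁
  exact eq_two_and_eq_one_of_mul_add_lt S.t_le_a ht (card_pos.mpr ⟨x₁, hx₁⟩) hBX
    ((S.card_bigDeficit_mul_add_le hy₁.1 hy₁.2).trans_lt S.sum_left_lt)

lemma add_le_deficit_of_card_bigDeficit_eq_one (hWY : t < #(Y.filter (G.degree · < n)))
    (hB : #(bigDeficit G X n a) = 1) {x : V} (hx : x ∈ bigDeficit G X n a) :
    a + t ≤ n - G.degree x := by
  obtain ⟨y, hy, hy0, hyt⟩ := S.exists_mem_deficit_le hWY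
  have hsub := S.sdiff_neighborFinset_subset_bigDeficit hy hyt
  have hdy := S.symm.card_sdiff_neighborFinset hy
  have hxy := eq_of_subset_of_card_le hsub (by omega) ▸ hx
  have := card_le_card hsub
  simp only [mem_sdiff, mem_neighborFinset] at hxy
  have := S.closed x hxy.1 y hy fun h => hxy.2 h.symm
  omega

theorem eq_two_and_exists_of_lt_card (hWX : t < #(X.filter (G.degree · < n)))
    (hWY : t < #(Y.filter (G.degree · < n))) :
    t = 2 ∧ ∃ xs ∈ X, ∃ ys ∈ Y, n - G.degree xs = a + 2 ∧ n - G.degree ys = a + 2 ∧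
      ∀ x ∈ X, ∀ y ∈ Y, ¬G.Adj x y → x = xs ∨ y = ys := by
  obtain ⟨rfl, hBX⟩ := S.eq_two_and_card_bigDeficit_eq_one hWX hWY
  obtain ⟨-, hBY⟩ := S.symm.eq_two_and_card_bigDeficit_eq_one hWY hWX
  obtain ⟨xs, hxs⟩ := card_eq_one.mp hBX
  obtain ⟨ys, hys⟩ := card_eq_one.mp hBY
  have hxsB : xs ∈ bigDeficit G X n a := hxs ▸ mem_singleton_self xs
  have hysB : ys ∈ bigDeficit G Y n a := hys ▸ mem_singleton_self ys
  have := S.add_le_deficit_of_card_bigDeficit_eq_one hWY hBX hxsB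
  have := S.symm.add_le_deficit_of_card_bigDeficit_eq_one hWX hBY hysB
  have := S.deficit_le xs
  have := S.deficit_le ys
  refine ⟨rfl, xs, (mem_bigDeficit.mp hxsB).1, ys, (mem_bigDeficit.mp hysB).1, by omega, by omega,
    fun x hx y hy hxy => ?_⟩
  rcases S.lt_deficit_or_lt_deficit_of_not_adj hx hy hxy with h | h
  · exact .inl (mem_singleton.mp (hxs ▸ mem_bigDeficit.mpr ⟨hx, h⟩))
  · exact .inr (mem_singleton.mp (hys ▸ mem_bigDeficit.mpr ⟨hy, h⟩))

end DenseClosed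

end

/-- An `(n+p+2)`-closed balanced bipartite graph of order `2n` with
`δ(G) ≥ k ≥ p ≥ 0`, `n ≥ 2k − p + 2` and `e(G) > n(n−k+p−1) + (k+2)(k−p+1)` contains
`K_{n,n−k+p}` (with one side full), or `k = p + 2` and `G` is isomorphic to `N_{n,n}^{p,1}`
or `N_{n,n}^{p,2}`. -/
theorem stmt10 {V : Type*} [Fintype V] [DecidableEq V] (n k p : ℕ)
    (G : SimpleGraph V) [DecidableRel G.Adj] (X Y : Finset V)
    (hdisj : Disjoint X Y) (hcov : X ∪ Y = Finset.univ)
    (hX : X.card = n) (hY : Y.card = n)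
    (hbip : ∀ u v, G.Adj u v → (u ∈ X ∧ v ∈ Y) ∨ (u ∈ Y ∧ v ∈ X))
    (hkp : p ≤ k) (hn : 2 * k + 2 ≤ n + p)
    (hδ : ∀ v : V, k ≤ G.degree v)
    (hclosed : ∀ x ∈ X, ∀ y ∈ Y, ¬ G.Adj x y →
      G.degree x + G.degree y < n + p + 2)
    (he : (n : ℤ) * ((n : ℤ) - k + p - 1) + ((k : ℤ) + 2) * ((k : ℤ) - p + 1)
        < (G.edgeFinset.card : ℤ)) :
    (∃ A B : Finset V, ((A = X ∧ B ⊆ Y) ∨ (A = Y ∧ B ⊆ X)) ∧ B.card + k = n + p ∧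
      ∀ a ∈ A, ∀ b ∈ B, G.Adj a b) ∨
    (k = p + 2 ∧ (Nonempty (G ≃g Ngraph1 n p) ∨ Nonempty (G ≃g Ngraph2 n p))) := by
  obtain ⟨t, ht⟩ : ∃ t, k = p + t := ⟨k - p, by omega⟩
  obtain ⟨a, ha⟩ : ∃ a, n = k + a + 2 := ⟨n - k - 2, by omega⟩
  have hG : G.IsBipartiteWith X Y := ⟨disjoint_coe.mpr hdisj, hbip⟩
  have S : DenseClosed G X Y n a t := .of_degree hG hX hY (by omega)
    (fun v => by have := hδ v; omega) (fun x hx y hy hxy => by have := hclosed x hx y hy hxy; omega)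
    (by
      have : (n : ℤ) * (n - k + p - 1) + (k + 2) * (k - p + 1) = n * n - a * (t + 1) := by
        subst ha ht; push_cast; ring
      zify; linarith)
  by_cases hWY : #(Y.filter (G.degree · < n)) ≤ t
  · obtain ⟨B, hBY, hB, hadj⟩ := hG.exists_subset_card_eq_forall_adj (m := n - t)
      (by rw [hX, hY]; omega)
    exact .inl ⟨X, B, .inl ⟨rfl, hBY⟩, by omega, hadj⟩
  by_cases hWX : #(X.filter (G.degree · < n)) ≤ t
  · obtain ⟨B, hBX, hB, hadj⟩ := hG.symm.exists_subset_card_eq_forall_adj (m := n - t)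
      (by rw [hX, hY]; omega)
    exact .inl ⟨Y, B, .inr ⟨rfl, hBX⟩, by omega, hadj⟩
  obtain ⟨rfl, xs, hxs, ys, hys, hdx, hdy, hnonadj⟩ :=
    S.eq_two_and_exists_of_lt_card (by omega) (by omega)
  refine .inr ⟨ht, ?_⟩
  by_cases hadj : G.Adj xs ys
  · exact .inl (hG.nonempty_iso_Ngraph1 hcov hX hY hxs hys hnonadj hadj hdx hdy (by omega))
  · exact .inr (hG.nonempty_iso_Ngraph2 hcov hX hY hxs hys hnonadj hadj hdx hdy (by omega))
end

section
/- Let p ≥ 0 and let G be a nearly balanced bipartite graph of order 2n−1 with parts X, Y, |X| = n, |Y| = n−1. If x ∈ X and y ∈ Y are non-adjacent vertices with d_G(x) + d_G(y) ≥ n + p + 1, then G is 2p-Hamilton-biconnected if and only if G + xy is 2p-Hamilton-biconnected. Consequently, G is 2p-Hamilton-biconnected if and only if its (n+p+1)-biclosure is 2p-Hamilton-biconnected. -/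
/-!
If a Hamiltonian path `v₀ … v_m` of `(G + xy) - W` between two vertices of `X` uses the new
edge, say `v_k = x` and `v_{k+1} = y`, then the positions `i` with `x ~ v_i` and the positions
`i` with `y ~ v_{i+1}` both index vertices `v_i ∈ Y \ W` (by bipartiteness, and as `v_m ∈ X`).
Deleting `W` costs `x` and `y` at most `p` neighbours each, and `y` may lose one more to `v₀`,
so the two sets of positions have at least `d(x) + d(y) - 2p - 1 ≥ |Y \ W| + 1` elements in
total: some `i` lies in both. Reversing the segment of the path between `v_i`/`v_{i+1}` and
`x`/`y` (a 2-opt move) gives a Hamiltonian path of `G - W` with the same ends.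
-/

/-- A nearly balanced bipartite graph `G` with parts `X, Y` (`|X| = |Y| + 1`) is
`2p`-Hamilton-biconnected: for every `W` meeting each part in `p` vertices, the subgraph
induced on the complement of `W` has a Hamiltonian path between any two distinct vertices
of `X \ W`. -/
def TwoPHamBicNearly {V : Type*} [DecidableEq V] (G : SimpleGraph V) (X Y : Finset V)
    (p : ℕ) : Prop :=
  ∀ W : Finset V, (W ∩ X).card = p → (W ∩ Y).card = p →
    ∀ u ∈ X, ∀ v ∈ X, u ≠ v → ∀ (hu : u ∉ W) (hv : v ∉ W),
      ∃ w : (G.induce {x : V | x ∉ W}).Walk ⟨u, hu⟩ ⟨v, hv⟩, w.IsHamiltonian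

/-- One step of the `ℓ`-biclosure procedure on a bipartite graph with parts `X, Y`:
add one edge between non-adjacent `x ∈ X`, `y ∈ Y` with degree sum at least `ℓ`. -/
def ClosureStep {V : Type*} (X Y : Finset V) (ℓ : ℕ) (G₁ G₂ : SimpleGraph V) : Prop :=
  ∃ x ∈ X, ∃ y ∈ Y, ¬ G₁.Adj x y ∧
    ℓ ≤ (G₁.neighborSet x).ncard + (G₁.neighborSet y).ncard ∧
    G₂ = G₁ ⊔ SimpleGraph.fromEdgeSet {s(x, y)}

/-- `G` is `ℓ`-closed w.r.t. the bipartition `(X, Y)`. -/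
def IsClosedBip {V : Type*} (X Y : Finset V) (ℓ : ℕ) (G : SimpleGraph V) : Prop :=
  ∀ x ∈ X, ∀ y ∈ Y, ¬ G.Adj x y →
    (G.neighborSet x).ncard + (G.neighborSet y).ncard < ℓ

section

open Finset

namespace List

variable {α : Type*} {R : α → α → Prop}

theorem exists_perm_isChain_append_reverse_append [Std.Symm R] {l₁ m l₂ : List α}
    (h₁ : l₁.IsChain R) (hm : m.IsChain R) (h₂ : l₂.IsChain R)
    (hl₁ : l₁ ≠ []) (hm₀ : m ≠ []) (hl₂ : l₂ ≠ [])
    (hleft : R (l₁.getLast hl₁) (m.getLast hm₀)) (hright : R (m.head hm₀) (l₂.head hl₂)) :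
    ∃ L : List α, L.Perm (l₁ ++ m ++ l₂) ∧ L.IsChain R ∧ L.head? = (l₁ ++ m ++ l₂).head? ∧
      L.getLast? = (l₁ ++ m ++ l₂).getLast? := by
  have hrev : m.reverse ≠ [] := by simpa using hm₀
  refine ⟨l₁ ++ m.reverse ++ l₂, (m.reverse_perm.append_left l₁).append_right l₂, ?_, ?_, ?_⟩
  · have hm' : m.reverse.IsChain R := isChain_reverse.2 (hm.imp fun _ _ => Std.Symm.symm _ _)
    refine (h₁.append hm' ?_).append h₂ ?_
    · simp [getLast?_eq_some_getLast hl₁, getLast?_eq_some_getLast hm₀, hleft]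
    · simp [getLast?_append_of_ne_nil _ hrev, head?_eq_some_head hm₀, head?_eq_some_head hl₂,
        hright]
  · simp [head?_append_of_ne_nil _ hl₁]
  · simp [getLast?_append_of_ne_nil _ hl₂]

end List

namespace SimpleGraph

variable {V : Type*} {G : SimpleGraph V} {x y : V} {L : List V}

theorem IsBipartiteWith.sup_edge {s t : Set V} (h : G.IsBipartiteWith s t) (hx : x ∈ s)
    (hy : y ∈ t) : (G ⊔ edge x y).IsBipartiteWith s t where
  disjoint := h.disjoint
  mem_of_adj := by
    rintro v w (hvw | hvw)
    · exact h.mem_of_adj hvw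
    · rcases ((edge_adj ..).1 hvw).1 with ⟨rfl, rfl⟩ | ⟨rfl, rfl⟩
      exacts [.inl ⟨hx, hy⟩, .inr ⟨hy, hx⟩]

theorem isChain_of_isChain_sup_edge (h : L.IsChain (G ⊔ edge x y).Adj) (hy : y ∉ L) :
    L.IsChain G.Adj :=
  h.imp_of_mem_imp fun a b _ hb hab => hab.resolve_right fun he => by
    rcases ((edge_adj ..).1 he).1 with ⟨-, rfl⟩ | ⟨rfl, -⟩ <;> contradiction

theorem exists_append_of_isChain_sup_edge (hnd : L.Nodup) (h : L.IsChain (G ⊔ edge x y).Adj)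
    (hG : ¬L.IsChain G.Adj) :
    ∃ P Q : List V, L = P ++ Q ∧ P.IsChain G.Adj ∧ Q.IsChain G.Adj ∧
      (P.getLast? = some x ∧ Q.head? = some y ∨ P.getLast? = some y ∧ Q.head? = some x) := by
  obtain ⟨a, b, P, Q, rfl, hab⟩ : ∃ a b P Q, L = P ++ a :: b :: Q ∧ ¬G.Adj a b := by
    simpa [List.isChain_iff_forall_rel_of_append_cons_cons] using hG
  obtain ⟨hP, hab', hQ⟩ := List.isChain_append_cons_cons.1 h
  have hbP : b ∉ P ++ [a] := by
    simp only [List.nodup_append, List.nodup_cons] at hnd; grind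
  have haQ : a ∉ b :: Q := by
    simp only [List.nodup_append, List.nodup_cons] at hnd; grind
  refine ⟨P ++ [a], b :: Q, by simp, ?_⟩
  rcases ((edge_adj ..).1 (hab'.resolve_left hab)).1 with ⟨rfl, rfl⟩ | ⟨rfl, rfl⟩
  · exact ⟨isChain_of_isChain_sup_edge hP hbP,
      isChain_of_isChain_sup_edge (edge_comm a b ▸ hQ) haQ, by simp⟩
  · exact ⟨isChain_of_isChain_sup_edge (edge_comm a b ▸ hP) hbP,
      isChain_of_isChain_sup_edge hQ haQ, by simp⟩

theorem exists_perm_isChain_of_adj_getElem {P Q : List V} (hP : P.IsChain G.Adj)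
    (hQ : Q.IsChain G.Adj) (hx : P.getLast? = some x) (hy : Q.head? = some y) {i : ℕ}
    (hi : i + 1 < (P ++ Q).length) (hxi : G.Adj x (P ++ Q)[i]) (hyi : G.Adj y (P ++ Q)[i + 1]) :
    ∃ L : List V, L.Perm (P ++ Q) ∧ L.IsChain G.Adj ∧ L.head? = (P ++ Q).head? ∧
      L.getLast? = (P ++ Q).getLast? := by
  have := G.symm
  have hP₀ : P ≠ [] := by rintro rfl; simp at hx
  have hQ₀ : Q ≠ [] := by rintro rfl; simp at hy
  rw [List.getLast?_eq_some_getLast hP₀, Option.some_inj] at hx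
  rw [List.head?_eq_some_head hQ₀, Option.some_inj] at hy
  rw [List.length_append] at hi
  rcases lt_trichotomy (i + 1) P.length with h | h | h
  · rw [← List.take_append_drop (i + 1) P]
    refine List.exists_perm_isChain_append_reverse_append (hP.take _) (hP.drop _) hQ
      (by simp; omega) (by simp; omega) hQ₀ ?_ ?_
    · rw [List.getElem_append_left (by omega)] at hxi
      simpa [List.getLast_take, List.getElem?_eq_getElem (show i < P.length by omega), hx]
        using hxi.symm
    · rw [List.getElem_append_left h] at hyi
      simpa [List.head_drop, hy] using hyi.symm
  · exfalso
    rw [List.getElem_append_left (by omega)] at hxi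
    simp [← hx, List.getLast_eq_getElem, show i = P.length - 1 by omega] at hxi
  · rw [← List.take_append_drop (i - P.length + 1) Q, ← List.append_assoc]
    refine List.exists_perm_isChain_append_reverse_append hP (hQ.take _) (hQ.drop _)
      hP₀ (by simp; omega) (by simp; omega) ?_ ?_
    · rw [List.getElem_append_right (by omega)] at hxi
      have hiQ : i - P.length < Q.length := by omega
      simpa [List.getLast_take, List.getElem?_eq_getElem hiQ, hx] using hxi
    · rw [List.getElem_append_right (by omega)] at hyi
      simpa [List.head_drop, List.head_take, hy, show i + 1 - P.length = i - P.length + 1 by omega]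
        using hyi

theorem ncard_neighborSet_eq_degree [Fintype V] [DecidableRel G.Adj] (v : V) :
    (G.neighborSet v).ncard = G.degree v := by
  rw [Set.ncard_eq_toFinset_card', Set.toFinset_card, card_neighborSet_eq_degree]

variable [DecidableEq V] {X Y : Finset V}

theorem exists_getElem_mem_and_getElem_add_one_mem {H : SimpleGraph V} {A B : Finset V}
    (hH : H.IsBipartiteWith X Y) (hnd : L.Nodup) (hch : L.IsChain H.Adj)
    (hlast : ∀ v ∈ L.getLast?, v ∈ X) (hAY : A ⊆ Y) (hAL : A ⊆ L.toFinset) (hBX : B ⊆ X)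
    (hBL : B ⊆ L.toFinset) (hcard : #(Y ∩ L.toFinset) + 2 ≤ #A + #B) :
    ∃ i, ∃ h : i + 1 < L.length, L[i] ∈ A ∧ L[i + 1] ∈ B := by
  have hXY : ∀ v ∈ X, v ∉ Y := fun v hX hY => Set.disjoint_left.1 hH.disjoint hX hY
  have hpos : 0 < L.length := by
    by_contra! h
    simp_all [List.length_eq_zero_iff, subset_empty]
  let g : Fin (L.length - 1) → V := fun i => L[i.1]
  let g' : Fin (L.length - 1) → V := fun i => L[i.1 + 1]
  have hg : Function.Injective g := fun i j h => Fin.ext (hnd.getElem_inj_iff.1 h)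
  set I := univ.filter (g · ∈ A)
  set J := univ.filter (g' · ∈ B)
  have hA : #A ≤ #I := by
    refine (card_le_card fun a ha => ?_).trans (card_image_le (f := g))
    obtain ⟨j, hj, rfl⟩ := List.getElem_of_mem (List.mem_toFinset.1 (hAL ha))
    have hj' : j < L.length - 1 := by
      by_contra! hj'
      refine hXY _ (hlast _ ?_) (hAY ha)
      simp [List.getLast?_eq_getElem?, show j = L.length - 1 by omega]
    exact mem_image.2 ⟨⟨j, hj'⟩, by simpa [I, g] using ha, rfl⟩
  have hB : #B ≤ #J + 1 := by
    refine (card_le_card fun b hb => ?_).trans ((card_insert_le L[0] _).trans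
      (Nat.add_le_add_right (card_image_le (f := g')) 1))
    obtain ⟨j, hj, rfl⟩ := List.getElem_of_mem (List.mem_toFinset.1 (hBL hb))
    rcases j with _ | j
    · exact mem_insert_self _ _
    · exact mem_insert_of_mem (mem_image.2 ⟨⟨j, by omega⟩, by simpa [J, g'] using hb, rfl⟩)
  have hIJ : #(I ∪ J) ≤ #(Y ∩ L.toFinset) := by
    refine card_le_card_of_injOn g (fun i hi => ?_) hg.injOn
    refine mem_inter.2 ⟨?_, List.mem_toFinset.2 (List.getElem_mem _)⟩
    rcases mem_union.1 hi with hi | hi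
    · exact hAY (mem_filter.1 hi).2
    · have hadj : H.Adj (g i) (g' i) := List.isChain_iff_getElem.1 hch i (by omega)
      exact ((hH.mem_of_adj hadj).resolve_left fun h => hXY _ (hBX (mem_filter.1 hi).2) h.2).1
  obtain ⟨i, hi⟩ : (I ∩ J).Nonempty := by
    rw [← card_pos]
    have := card_union_add_card_inter I J
    omega
  exact ⟨i, by omega, (mem_filter.1 (mem_inter.1 hi).1).2, (mem_filter.1 (mem_inter.1 hi).2).2⟩

theorem exists_isHamiltonian_induce_iff {s : Set V} {u v : V} (hu : u ∈ s) (hv : v ∈ s) :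
    (∃ w : (G.induce s).Walk ⟨u, hu⟩ ⟨v, hv⟩, w.IsHamiltonian) ↔
      ∃ L : List V, L.Nodup ∧ (∀ z, z ∈ L ↔ z ∈ s) ∧ L.IsChain G.Adj ∧ L.head? = some u ∧
        L.getLast? = some v := by
  constructor
  · rintro ⟨w, hw⟩
    let w' := w.map (Embedding.induce s).toHom
    refine ⟨w'.support, (hw.isPath.map (Embedding.induce (G := G) s).injective).support_nodup,
      fun z => ?_, w'.isChain_adj_support, by rw [← w'.cons_tail_support]; rfl,
      by rw [List.getLast?_eq_some_getLast w'.support_ne_nil, Walk.getLast_support]; rfl⟩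
    simp only [w', Walk.support_map, List.mem_map]
    exact ⟨fun ⟨a, _, ha⟩ => ha ▸ a.2, fun hz => ⟨⟨z, hz⟩, hw.mem_support _, rfl⟩⟩
  · rintro ⟨L, hnd, hmem, hch, hh, hl⟩
    have hne : L ≠ [] := by rintro rfl; simp at hh
    let q : G.Walk u v := (Walk.ofSupport L hne hch).copy
      (by simpa [List.head?_eq_some_head hne] using hh)
      (by simpa [List.getLast?_eq_some_getLast hne] using hl)
    have hq : q.support = L := by simp [q]
    let w := q.induce s fun z hz => (hmem z).1 (hq ▸ hz)
    have hw : w.IsPath := by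
      rw [← Walk.isPath_map_iff_of_injective (f := (Embedding.induce s).toHom)
        Subtype.val_injective]
      simpa [w, Walk.isPath_def, hq] using hnd
    refine ⟨w, hw.isHamiltonian_iff.2 fun a => ?_⟩
    simp [w, hq, hmem]

variable [DecidableRel G.Adj]

theorem degree_le_card_filter_adj_add_card_inter [Fintype V] {S W T : Finset V}
    (hT : ∀ z, G.Adj x z → z ∈ T) (hS : ∀ z, z ∉ W → z ∈ S) :
    G.degree x ≤ #{z ∈ S | G.Adj x z} + #(W ∩ T) := by
  rw [← card_neighborFinset_eq_degree]
  refine (card_le_card fun z hz => ?_).trans (card_union_le _ _)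
  rw [mem_neighborFinset] at hz
  by_cases hzW : z ∈ W
  · exact mem_union_right _ (mem_inter.2 ⟨hzW, hT z hz⟩)
  · exact mem_union_left _ (mem_filter.2 ⟨hS z hzW, hz⟩)

theorem exists_perm_isChain_of_isChain_sup_edge_of_append (hG : G.IsBipartiteWith X Y)
    (hx : x ∈ X) (hy : y ∈ Y) (hnd : L.Nodup) (hch : L.IsChain (G ⊔ edge x y).Adj)
    (hlast : ∀ v ∈ L.getLast?, v ∈ X)
    (hdeg : #(Y ∩ L.toFinset) + 2 ≤
      #{z ∈ L.toFinset | G.Adj x z} + #{z ∈ L.toFinset | G.Adj y z})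
    {P Q : List V} (hL : L = P ++ Q) (hP : P.IsChain G.Adj) (hQ : Q.IsChain G.Adj)
    (hPx : P.getLast? = some x) (hQy : Q.head? = some y) :
    ∃ L' : List V, L'.Perm L ∧ L'.IsChain G.Adj ∧ L'.head? = L.head? ∧
      L'.getLast? = L.getLast? := by
  obtain ⟨i, hi, hxi, hyi⟩ := exists_getElem_mem_and_getElem_add_one_mem (hG.sup_edge hx hy) hnd
    hch hlast (fun z hz => hG.mem_of_mem_adj hx (mem_filter.1 hz).2) (filter_subset _ _)
    (fun z hz => hG.symm.mem_of_mem_adj hy (mem_filter.1 hz).2) (filter_subset _ _) hdeg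
  subst hL
  exact exists_perm_isChain_of_adj_getElem hP hQ hPx hQy hi (mem_filter.1 hxi).2
    (mem_filter.1 hyi).2

theorem exists_perm_isChain_of_isChain_sup_edge (hG : G.IsBipartiteWith X Y) (hx : x ∈ X)
    (hy : y ∈ Y) (hnd : L.Nodup) (hch : L.IsChain (G ⊔ edge x y).Adj)
    (hhead : ∀ v ∈ L.head?, v ∈ X) (hlast : ∀ v ∈ L.getLast?, v ∈ X)
    (hdeg : #(Y ∩ L.toFinset) + 2 ≤
      #{z ∈ L.toFinset | G.Adj x z} + #{z ∈ L.toFinset | G.Adj y z}) :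
    ∃ L' : List V, L'.Perm L ∧ L'.IsChain G.Adj ∧ L'.head? = L.head? ∧
      L'.getLast? = L.getLast? := by
  by_cases hGL : L.IsChain G.Adj
  · exact ⟨L, .refl L, hGL, rfl, rfl⟩
  obtain ⟨P, Q, hL, hP, hQ, ⟨hPx, hQy⟩ | ⟨hPy, hQx⟩⟩ :=
    exists_append_of_isChain_sup_edge hnd hch hGL
  · exact exists_perm_isChain_of_isChain_sup_edge_of_append hG hx hy hnd hch hlast hdeg hL hP hQ
      hPx hQy
  · have reverse_isChain {H : SimpleGraph V} {l : List V} (h : l.IsChain H.Adj) :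
        l.reverse.IsChain H.Adj := List.isChain_reverse.2 (h.imp fun _ _ h => h.symm)
    obtain ⟨L', hperm, hL', hh, hl⟩ := exists_perm_isChain_of_isChain_sup_edge_of_append hG hx hy
      (List.nodup_reverse.2 hnd) (reverse_isChain hch) (by simpa using hhead) (by simpa using hdeg)
      (by simp [hL]) (reverse_isChain hQ) (reverse_isChain hP) (by simpa using hQx)
      (by simpa using hPy)
    refine ⟨L'.reverse, (L'.reverse_perm.trans hperm).trans L.reverse_perm,
      reverse_isChain hL', ?_, ?_⟩
    · simpa using hl
    · simpa using hh

end SimpleGraph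

open SimpleGraph

variable {V : Type*} [DecidableEq V] {G H : SimpleGraph V} {X Y : Finset V} {p : ℕ}

theorem twoPHamBicNearly_iff :
    TwoPHamBicNearly G X Y p ↔ ∀ W : Finset V, #(W ∩ X) = p → #(W ∩ Y) = p →
      ∀ u ∈ X, ∀ v ∈ X, u ≠ v → u ∉ W → v ∉ W →
        ∃ L : List V, L.Nodup ∧ (∀ z, z ∈ L ↔ z ∉ W) ∧ L.IsChain G.Adj ∧ L.head? = some u ∧
          L.getLast? = some v := by
  simp only [TwoPHamBicNearly, exists_isHamiltonian_induce_iff, Set.mem_ofPred_eq]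

theorem TwoPHamBicNearly.mono (hGH : G ≤ H) (hG : TwoPHamBicNearly G X Y p) :
    TwoPHamBicNearly H X Y p := by
  rw [twoPHamBicNearly_iff] at hG ⊢
  intro W hWX hWY u hu v hv huv huW hvW
  obtain ⟨L, hnd, hmem, hch, hh, hl⟩ := hG W hWX hWY u hu v hv huv huW hvW
  exact ⟨L, hnd, hmem, hch.imp fun _ _ h => hGH h, hh, hl⟩

theorem twoPHamBicNearly_sup_edge_iff [Fintype V] [DecidableRel G.Adj] {x y : V}
    (hG : G.IsBipartiteWith X Y) (hx : x ∈ X) (hy : y ∈ Y)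
    (hdeg : #Y + p + 2 ≤ G.degree x + G.degree y) :
    TwoPHamBicNearly G X Y p ↔ TwoPHamBicNearly (G ⊔ edge x y) X Y p := by
  refine ⟨.mono le_sup_left, fun h => ?_⟩
  rw [twoPHamBicNearly_iff] at h ⊢
  intro W hWX hWY u hu v hv huv huW hvW
  obtain ⟨L, hnd, hmem, hch, hh, hl⟩ := h W hWX hWY u hu v hv huv huW hvW
  have hS : ∀ z, z ∉ W → z ∈ L.toFinset := fun z hz => List.mem_toFinset.2 ((hmem z).2 hz)
  have hdx := degree_le_card_filter_adj_add_card_inter (fun z => hG.mem_of_mem_adj hx) hS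
  have hdy := degree_le_card_filter_adj_add_card_inter (fun z => hG.symm.mem_of_mem_adj hy) hS
  have hYL : Y ∩ L.toFinset = Y \ W := by ext z; simp [hmem]
  have hYW : #(Y \ W) + #(W ∩ Y) = #Y := by
    rw [inter_comm]; exact card_sdiff_add_card_inter Y W
  obtain ⟨L', hperm, hch', hh', hl'⟩ := exists_perm_isChain_of_isChain_sup_edge hG hx hy hnd hch
    (by simpa [hh] using hu) (by simpa [hl] using hv) (by rw [hYL]; omega)
  exact ⟨L', hperm.nodup_iff.2 hnd, fun z => hperm.mem_iff.trans (hmem z), hch', hh'.trans hh,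
    hl'.trans hl⟩

theorem twoPHamBicNearly_iff_of_reflTransGen [Fintype V] {ℓ : ℕ} (hG : G.IsBipartiteWith X Y)
    (hℓ : #Y + p + 2 ≤ ℓ) (hGH : Relation.ReflTransGen (ClosureStep X Y ℓ) G H) :
    TwoPHamBicNearly G X Y p ↔ TwoPHamBicNearly H X Y p := by
  suffices H.IsBipartiteWith X Y ∧ (TwoPHamBicNearly G X Y p ↔ TwoPHamBicNearly H X Y p) from
    this.2
  induction hGH with
  | refl => exact ⟨hG, .rfl⟩
  | tail _ hstep ih =>
    obtain ⟨x, hx, y, hy, -, hdeg, rfl⟩ := hstep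
    classical
    rw [ncard_neighborSet_eq_degree, ncard_neighborSet_eq_degree] at hdeg
    exact ⟨ih.1.sup_edge hx hy,
      ih.2.trans (twoPHamBicNearly_sup_edge_iff ih.1 hx hy (by omega))⟩

end

theorem stmt12_general {V : Type*} [Fintype V] [DecidableEq V] (n p : ℕ)
    (G : SimpleGraph V) [DecidableRel G.Adj] (X Y : Finset V)
    (hdisj : Disjoint X Y)
    (hY : Y.card = n - 1) (hn : 1 ≤ n)
    (hbip : ∀ u v, G.Adj u v → (u ∈ X ∧ v ∈ Y) ∨ (u ∈ Y ∧ v ∈ X)) :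
    (∀ x ∈ X, ∀ y ∈ Y, ¬ G.Adj x y → n + p + 1 ≤ G.degree x + G.degree y →
      (TwoPHamBicNearly G X Y p ↔
        TwoPHamBicNearly (G ⊔ SimpleGraph.fromEdgeSet {s(x, y)}) X Y p)) ∧
    (∀ H : SimpleGraph V, Relation.ReflTransGen (ClosureStep X Y (n + p + 1)) G H →
      IsClosedBip X Y (n + p + 1) H →
      (TwoPHamBicNearly G X Y p ↔ TwoPHamBicNearly H X Y p)) := by
  have hG : G.IsBipartiteWith X Y := ⟨Finset.disjoint_coe.2 hdisj, fun u v h => hbip u v h⟩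
  exact ⟨fun x hx y hy _ hdeg => twoPHamBicNearly_sup_edge_iff hG hx hy (by omega),
    fun H hGH _ => twoPHamBicNearly_iff_of_reflTransGen hG (by omega) hGH⟩

/-- Lemma 2.6 / biclosure lemma for nearly balanced bipartite graphs. -/
theorem stmt12 {V : Type*} [Fintype V] [DecidableEq V] (n p : ℕ)
    (G : SimpleGraph V) [DecidableRel G.Adj] (X Y : Finset V)
    (hdisj : Disjoint X Y) (hcov : X ∪ Y = Finset.univ)
    (hX : X.card = n) (hY : Y.card = n - 1) (hn : 1 ≤ n)
    (hbip : ∀ u v, G.Adj u v → (u ∈ X ∧ v ∈ Y) ∨ (u ∈ Y ∧ v ∈ X)) :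
    (∀ x ∈ X, ∀ y ∈ Y, ¬ G.Adj x y → n + p + 1 ≤ G.degree x + G.degree y →
      (TwoPHamBicNearly G X Y p ↔
        TwoPHamBicNearly (G ⊔ SimpleGraph.fromEdgeSet {s(x, y)}) X Y p)) ∧
    (∀ H : SimpleGraph V, Relation.ReflTransGen (ClosureStep X Y (n + p + 1)) G H →
      IsClosedBip X Y (n + p + 1) H →
      (TwoPHamBicNearly G X Y p ↔ TwoPHamBicNearly H X Y p)) :=
  stmt12_general n p G X Y hdisj hY hn hbip
end

section
/- For p ≥ 0, s, t ≥ 1, and n = s + t + p, the balanced bipartite graph M_{n,n}^{s,t} is not 2p-Hamilton-biconnected. -/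
/-- The graph `M_{n,m}^{s,t}`: left vertices `i < s` form `X₁`, the rest `X₂`; right
vertices `j < m - t` form `Y₁`, the rest `Y₂`.  Edges: `X₁–Y₁`, `X₂–Y₁`, `X₂–Y₂`. -/
def Mgraph (n m s t : ℕ) : SimpleGraph (Fin n ⊕ Fin m) :=
  crossGraph (fun i j => s ≤ (i : ℕ) ∨ (j : ℕ) < m - t)

/-- A balanced bipartite graph `G` with parts `X, Y` is `2p`-Hamilton-biconnected:
for every `W` meeting each part in `p` vertices, the subgraph induced on the complement of
`W` has a Hamiltonian path between any vertex of `X \ W` and any vertex of `Y \ W`. -/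
def TwoPHamBic {V : Type*} [DecidableEq V] (G : SimpleGraph V) (X Y : Finset V) (p : ℕ) :
    Prop :=
  ∀ W : Finset V, (W ∩ X).card = p → (W ∩ Y).card = p →
    ∀ x ∈ X, ∀ y ∈ Y, ∀ (hx : x ∉ W) (hy : y ∉ W),
      ∃ w : (G.induce {v : V | v ∉ W}).Walk ⟨x, hx⟩ ⟨y, hy⟩, w.IsHamiltonian

/-! Delete the vertices with index in `[s, s + p)` on both sides. What survives of `X₁` and of
`Y₁` has `s` vertices each, and `X₁` sees only `Y₁`. Along a Hamiltonian path from `X₂` to `Y₁`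
every vertex of `X₁` is entered from a vertex of `Y₁` other than the last one, so `s ≤ s - 1`. -/

open Finset

namespace SimpleGraph.Walk

variable {V : Type*} [DecidableEq V] {G : SimpleGraph V} {u v : V}

theorem countP_tail_le_countP_dropLast (w : G.Walk u v) {A B : Finset V}
    (hAB : ∀ a b, G.Adj a b → b ∈ A → a ∈ B) :
    w.support.tail.countP (· ∈ A) ≤ w.support.dropLast.countP (· ∈ B) := by
  rw [← w.map_snd_darts, ← w.map_fst_darts, List.countP_map, List.countP_map]
  exact List.countP_mono_left fun d _ hd => by
    simpa using hAB d.fst d.snd d.adj (by simpa using hd)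

theorem IsHamiltonian.countP_support [Fintype V] {w : G.Walk u v} (hw : w.IsHamiltonian)
    (A : Finset V) : w.support.countP (· ∈ A) = #A := by
  rw [List.countP_eq_length_filter,
    ← List.toFinset_card_of_nodup (hw.isPath.support_nodup.filter _), List.toFinset_filter,
    hw.toFinset_support]
  simp

theorem IsHamiltonian.card_lt_card [Fintype V] {w : G.Walk u v} (hw : w.IsHamiltonian)
    {A B : Finset V} (hAB : ∀ a b, G.Adj a b → b ∈ A → a ∈ B) (hu : u ∉ A) (hv : v ∈ B) :
    #A < #B := by
  have hA : w.support.tail.countP (· ∈ A) = #A := by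
    rw [← hw.countP_support A, ← w.cons_tail_support, List.countP_cons_of_neg (by simpa using hu)]
    rfl
  have hB : w.support.dropLast.countP (· ∈ B) + 1 = #B := by
    rw [← hw.countP_support B, ← List.dropLast_append_getLast w.support_ne_nil, w.getLast_support,
      List.countP_append]
    simp [hv]
  have := w.countP_tail_le_countP_dropLast hAB
  omega

end SimpleGraph.Walk

theorem Finset.card_disjSum_inter_image_inl {α β : Type*} [Fintype α] [DecidableEq α]
    [DecidableEq β] (s : Finset α) (t : Finset β) :
    #(s.disjSum t ∩ univ.image Sum.inl) = #s := by
  rw [show s.disjSum t ∩ univ.image Sum.inl = s.map .inl by ext (a | b) <;> simp, card_map]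

theorem Finset.card_disjSum_inter_image_inr {α β : Type*} [Fintype β] [DecidableEq α]
    [DecidableEq β] (s : Finset α) (t : Finset β) :
    #(s.disjSum t ∩ univ.image Sum.inr) = #t := by
  rw [show s.disjSum t ∩ univ.image Sum.inr = t.map .inr by ext (a | b) <;> simp, card_map]

theorem Mgraph_adj_inl_of_lt {n m s t : ℕ} {v : Fin n ⊕ Fin m} {i : Fin n} (hi : (i : ℕ) < s)
    (h : (Mgraph n m s t).Adj v (.inl i)) : ∃ j : Fin m, v = .inr j ∧ (j : ℕ) < m - t := by
  rcases v with _ | j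
  · exact h.elim
  · exact ⟨j, rfl, (h : s ≤ (i : ℕ) ∨ (j : ℕ) < m - t).resolve_left (by omega)⟩

/-- For `p ≥ 0`, `s, t ≥ 1` and `n = s + t + p`, the graph
`M_{n,n}^{s,t}` is not `2p`-Hamilton-biconnected. -/
theorem stmt13 (n s t p : ℕ) (hs : 1 ≤ s) (ht : 1 ≤ t) (hn : n = s + t + p) :
    ¬ TwoPHamBic (Mgraph n n s t)
      (Finset.univ.image Sum.inl) (Finset.univ.image Sum.inr) p := by
  intro H
  let I : Finset (Fin n) := Ico ⟨s, by omega⟩ ⟨s + p, by omega⟩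
  let L : Finset (Fin n) := Iio ⟨s, by omega⟩
  let S : Set (Fin n ⊕ Fin n) := {v | v ∉ I.disjSum I}
  have hI : #I = p := by simp [I]
  have hLI : ∀ i ∈ L, i ∉ I := fun i hi => by
    simp only [L, I, mem_Iio, mem_Ico, Fin.lt_def, Fin.le_def] at hi ⊢; omega
  obtain ⟨w, hw⟩ := H (I.disjSum I) (by rw [card_disjSum_inter_image_inl, hI])
    (by rw [card_disjSum_inter_image_inr, hI]) (.inl ⟨s + p, by omega⟩) (by simp)
    (.inr ⟨0, by omega⟩) (by simp) (by simp [I, Fin.le_def]) (by simp [I, Fin.le_def]; omega)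
  let X₁ := (L.disjSum ∅).subtype (· ∈ S)
  let Y₁ := (disjSum ∅ L).subtype (· ∈ S)
  have hX₁ : #X₁ = s := by
    rw [card_subtype, filter_true_of_mem (by rintro (i | i) <;> simp +contextual [S, hLI])]
    simp [L]
  have hY₁ : #Y₁ = s := by
    rw [card_subtype, filter_true_of_mem (by rintro (i | i) <;> simp +contextual [S, hLI])]
    simp [L]
  have hadj : ∀ a b, (Mgraph n n s t).induce S |>.Adj a b → b ∈ X₁ → a ∈ Y₁ := by
    rintro ⟨a, ha⟩ ⟨_ | i, _⟩ hab hb <;>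
      simp only [X₁, mem_subtype, inl_mem_disjSum, inr_mem_disjSum, notMem_empty] at hb
    obtain ⟨j, rfl, hj⟩ := Mgraph_adj_inl_of_lt (by simpa [L, Fin.lt_def] using hb) hab
    simp only [S, Y₁, Set.mem_ofPred_eq, mem_subtype, inr_mem_disjSum, L, I, mem_Iio, mem_Ico,
      Fin.lt_def, Fin.le_def] at ha ⊢
    omega
  have := hw.card_lt_card hadj (by simp [X₁, L, Fin.lt_def]) (by simp [Y₁, L, Fin.lt_def]; omega)
  omega
end

section
/- For p ≥ 0 and n ≥ p + 6, the balanced bipartite graph N_{n,n}^{p,1} is not 2p-Hamilton-biconnected: after deleting p vertices of maximum degree from each side so as to leave the graph N_{n−p,n−p}^{0,1}, there exist a vertex x in one part and y in the other part, both of full degree n − p, such that there is no Hamiltonian path between x and y. -/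
namespace SimpleGraph.Walk

variable {V : Type*} {G : SimpleGraph V}

lemma adj_getVert_pred {x y : V} (w : G.Walk x y) {k : ℕ} (hk0 : 0 < k) (hk : k ≤ w.length) :
    G.Adj (w.getVert k) (w.getVert (k - 1)) := by
  simpa [Nat.sub_add_cancel hk0] using (w.adj_getVert_succ (i := k - 1) (by omega)).symm

lemma IsHamiltonian.eq_or_eq_or_eq_or_eq [DecidableEq V] {x y u v : V} {w : G.Walk x y}
    (hw : w.IsHamiltonian) (hux : u ≠ x) (huy : u ≠ y) (hvx : v ≠ x)
    (hu : ∀ c, G.Adj u c → c = y ∨ c = v) (hv : ∀ c, G.Adj v c → c = x ∨ c = u) (z : V) :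
    z = x ∨ z = v ∨ z = u ∨ z = y := by
  have hp := hw.isPath
  have hinj {i j : ℕ} (hi : i ≤ w.length) (hj : j ≤ w.length) (h : i ≠ j) :
      w.getVert i ≠ w.getVert j := fun he => h (hp.getVert_injOn hi hj he)
  obtain ⟨k, rfl, hkL⟩ := mem_support_iff_exists_getVert.1 (hw.mem_support u)
  have hk0 : k ≠ 0 := by rintro rfl; exact hux w.getVert_zero
  have hkL' : k ≠ w.length := by rintro rfl; exact huy w.getVert_length
  have hpred : w.getVert (k - 1) = v := by
    refine (hu _ (w.adj_getVert_pred (by omega) hkL)).resolve_left fun h => ?_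
    exact absurd ((hp.getVert_eq_end_iff (by omega)).1 h) (by omega)
  have hsucc : w.getVert (k + 1) = y := by
    refine (hu _ (w.adj_getVert_succ (by omega))).resolve_right fun h => ?_
    exact hinj (by omega) (by omega) (by omega) (h.trans hpred.symm)
  subst hpred
  have hk1 : k - 1 ≠ 0 := by intro h; rw [h] at hvx; exact hvx w.getVert_zero
  have hpred2 : w.getVert (k - 1 - 1) = x := by
    refine (hv _ (w.adj_getVert_pred (by omega) (by omega))).resolve_right fun h => ?_
    exact hinj (by omega) (by omega) (by omega) h
  have hk2 : k = 2 := by have := (hp.getVert_eq_start_iff (by omega)).1 hpred2; omega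
  have hL : w.length = 3 := by have := (hp.getVert_eq_end_iff (by omega)).1 hsucc; omega
  subst hk2
  obtain ⟨j, rfl, hj⟩ := mem_support_iff_exists_getVert.1 (hw.mem_support z)
  rw [hL] at hj
  interval_cases j
  · exact .inl w.getVert_zero
  · exact .inr (.inl rfl)
  · exact .inr (.inr (.inl rfl))
  · exact .inr (.inr (.inr (hL ▸ w.getVert_length)))

end SimpleGraph.Walk

lemma Finset.disjSum_inter_image_inl {α β : Type*} [Fintype α] [DecidableEq α] [DecidableEq β]
    (s : Finset α) (t : Finset β) :
    s.disjSum t ∩ Finset.univ.image Sum.inl = s.map Function.Embedding.inl := by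
  ext (a | b) <;> simp

lemma Finset.disjSum_inter_image_inr {α β : Type*} [Fintype β] [DecidableEq α] [DecidableEq β]
    (s : Finset α) (t : Finset β) :
    s.disjSum t ∩ Finset.univ.image Sum.inr = t.map Function.Embedding.inr := by
  ext (a | b) <;> simp

namespace Ngraph1

variable {n p : ℕ}

lemma adj_inl_inr_iff (hn : p + 2 ≤ n) (i j : Fin n) :
    (Ngraph1 n p).Adj (.inl i) (.inr j) ↔
      ¬ ((i : ℕ) < n - p - 2 ∧ n - 1 ≤ (j : ℕ)) ∧ ¬ (n - 1 ≤ (i : ℕ) ∧ (j : ℕ) < n - p - 2) := by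
  change (¬(nClass _ _ _ = 1 ∧ _) ∧ _) ↔ _
  unfold nClass
  split_ifs <;> omega

lemma not_adj_inl_inl (i j : Fin n) : ¬ (Ngraph1 n p).Adj (.inl i) (.inl j) := id

lemma not_adj_inr_inr (i j : Fin n) : ¬ (Ngraph1 n p).Adj (.inr i) (.inr j) := id

lemma adj_inl_inr_of_left_mem_Ico (hn : p + 2 ≤ n) {i : Fin n}
    (hi : (i : ℕ) ∈ Set.Ico (n - p - 2) (n - 1)) (j : Fin n) :
    (Ngraph1 n p).Adj (.inl i) (.inr j) := by
  rw [adj_inl_inr_iff hn]; simp only [Set.mem_Ico] at hi; omega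

lemma adj_inl_inr_of_right_mem_Ico (hn : p + 2 ≤ n) (i : Fin n) {j : Fin n}
    (hj : (j : ℕ) ∈ Set.Ico (n - p - 2) (n - 1)) : (Ngraph1 n p).Adj (.inl i) (.inr j) := by
  rw [adj_inl_inr_iff hn]; simp only [Set.mem_Ico] at hj; omega

/-- All of the middle block except its last vertex. -/
def middle (n p : ℕ) : Finset (Fin n) :=
  (Finset.Ico (n - p - 2) (n - 2)).attachFin fun m hm => by simp at hm; omega

def deleted (n p : ℕ) : Finset (Fin n ⊕ Fin n) := (middle n p).disjSum (middle n p)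

lemma inl_mem_deleted {i : Fin n} :
    .inl i ∈ deleted n p ↔ n - p - 2 ≤ (i : ℕ) ∧ (i : ℕ) < n - 2 := by
  simp [deleted, middle]

lemma inr_mem_deleted {i : Fin n} :
    .inr i ∈ deleted n p ↔ n - p - 2 ≤ (i : ℕ) ∧ (i : ℕ) < n - 2 := by
  simp [deleted, middle]

lemma card_middle (hn : p + 2 ≤ n) : (middle n p).card = p := by
  simp only [middle, Finset.card_attachFin, Nat.card_Ico]; omega

lemma card_deleted_inter_image_inl (hn : p + 2 ≤ n) :
    (deleted n p ∩ Finset.univ.image Sum.inl).card = p := by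
  rw [deleted, Finset.disjSum_inter_image_inl, Finset.card_map, card_middle hn]

lemma card_deleted_inter_image_inr (hn : p + 2 ≤ n) :
    (deleted n p ∩ Finset.univ.image Sum.inr).card = p := by
  rw [deleted, Finset.disjSum_inter_image_inr, Finset.card_map, card_middle hn]

lemma not_exists_isHamiltonian (hn : p + 3 ≤ n) {x : Fin n} (hx : (x : ℕ) = n - 2)
    (hxl : Sum.inl x ∉ deleted n p) (hxr : Sum.inr x ∉ deleted n p) :
    ¬ ∃ w : ((Ngraph1 n p).induce {v | v ∉ deleted n p}).Walk ⟨Sum.inl x, hxl⟩ ⟨Sum.inr x, hxr⟩,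
      w.IsHamiltonian := by
  rintro ⟨w, hw⟩
  let u : Fin n := ⟨n - 1, by omega⟩
  let z : Fin n := ⟨0, by omega⟩
  have hul : .inl u ∉ deleted n p := by rw [inl_mem_deleted]; dsimp only [u]; omega
  have hur : .inr u ∉ deleted n p := by rw [inr_mem_deleted]; dsimp only [u]; omega
  have hzl : .inl z ∉ deleted n p := by rw [inl_mem_deleted]; dsimp only [z]; omega
  have hxu (c : Fin n) (hc : n - 2 ≤ (c : ℕ)) : c = x ∨ c = u := by
    simp only [Fin.ext_iff, u]; omega
  have hz := hw.eq_or_eq_or_eq_or_eq (u := ⟨.inl u, hul⟩) (v := ⟨.inr u, hur⟩)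
    (by simp only [ne_eq, Subtype.mk.injEq, Sum.inl.injEq, Fin.ext_iff, u]; omega) (by simp) (by simp)
    ?_ ?_ ⟨.inl z, hzl⟩
  · simp only [Set.mem_ofPred_eq, Subtype.mk.injEq, Sum.inl.injEq, Fin.ext_iff, reduceCtorEq,
      or_false, false_or, z, u] at hz
    omega
  · rintro ⟨i | j, hc⟩ hadj
    · exact (not_adj_inl_inl (p := p) u i hadj).elim
    · have hj := (adj_inl_inr_iff (by omega) u j).1 hadj
      rw [Set.mem_ofPred_eq, inr_mem_deleted] at hc
      rcases hxu j (by dsimp only [u] at hj; omega) with rfl | rfl <;> simp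
  · rintro ⟨i | j, hc⟩ hadj
    · have hi := (adj_inl_inr_iff (by omega) i u).1 hadj.symm
      rw [Set.mem_ofPred_eq, inl_mem_deleted] at hc
      rcases hxu i (by dsimp only [u] at hi; omega) with rfl | rfl <;> simp
    · exact (not_adj_inr_inr (p := p) u j hadj).elim

end Ngraph1

open Ngraph1 in
/-- For `p ≥ 0` and `n ≥ p + 6`, `N_{n,n}^{p,1}` is not
`2p`-Hamilton-biconnected: there is a balanced deletion set `W` of size `2p` and vertices
`x, y` on opposite sides, of full degree `n − p` in the remaining graph, with no Hamiltonian
path between them. -/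
theorem stmt14 (n p : ℕ) (hn : p + 6 ≤ n) :
    ¬ TwoPHamBic (Ngraph1 n p)
        (Finset.univ.image Sum.inl) (Finset.univ.image Sum.inr) p ∧
    ∃ W : Finset (Fin n ⊕ Fin n),
      (W ∩ Finset.univ.image Sum.inl).card = p ∧
      (W ∩ Finset.univ.image Sum.inr).card = p ∧
      ∃ x y : Fin n, ∃ (hx : Sum.inl x ∉ W) (hy : Sum.inr y ∉ W),
        (∀ j : Fin n, Sum.inr j ∉ W → (Ngraph1 n p).Adj (Sum.inl x) (Sum.inr j)) ∧
        (∀ i : Fin n, Sum.inl i ∉ W → (Ngraph1 n p).Adj (Sum.inl i) (Sum.inr y)) ∧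
        ¬ ∃ w : ((Ngraph1 n p).induce {v | v ∉ W}).Walk ⟨Sum.inl x, hx⟩ ⟨Sum.inr y, hy⟩,
            w.IsHamiltonian := by
  let x : Fin n := ⟨n - 2, by omega⟩
  have hx_mid : (x : ℕ) ∈ Set.Ico (n - p - 2) (n - 1) := by simp only [Set.mem_Ico, x]; omega
  have hxl : Sum.inl x ∉ deleted n p := by simp [inl_mem_deleted, x]
  have hxr : Sum.inr x ∉ deleted n p := by simp [inr_mem_deleted, x]
  have hl := card_deleted_inter_image_inl (n := n) (p := p) (by omega)
  have hr := card_deleted_inter_image_inr (n := n) (p := p) (by omega)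
  have hnoham := not_exists_isHamiltonian (by omega) (x := x) rfl hxl hxr
  refine ⟨fun h => hnoham (h _ hl hr _ (by simp) _ (by simp) hxl hxr), deleted n p, hl, hr,
    x, x, hxl, hxr, fun j _ => ?_, fun i _ => ?_, hnoham⟩
  · exact adj_inl_inr_of_left_mem_Ico (by omega) hx_mid j
  · exact adj_inl_inr_of_right_mem_Ico (by omega) i hx_mid
end

section
/- For p ≥ 0, s ≥ 2, t ≥ 1, and n = s + t + p + 1, the balanced bipartite graph M_{n,n}^{s,t;−} is 2p-Hamilton-biconnected. -/
/-- The graph `M_{n,n}^{s,t;-}`: left blocks `X₁,X₂,X₃` of sizes `s-1,1,n-s`, right blocks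
`Y₁,Y₂,Y₃` of sizes `n-t-1,1,t`; `X₁` is joined to `Y₁`, `X₂` to `Y₁ ∪ Y₂`,
and `X₃` to `Y₁ ∪ Y₂ ∪ Y₃`, i.e. a cross pair is adjacent iff `class(y) ≤ class(x)`. -/
def MgraphMinus (n s t : ℕ) : SimpleGraph (Fin n ⊕ Fin n) :=
  crossGraph (fun i j => nClass (n-t-1) 1 (j:ℕ) ≤ nClass (s-1) 1 (i:ℕ))

/-!
Call `X₁, X₂, X₃` and `Y₁, Y₂, Y₃` the vertices of level `1, 2, 3`; then `x ∈ X` and `y ∈ Y` are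
adjacent iff `level y ≤ level x`. A Hamiltonian path `x₀ y₀ x₁ y₁ … xₘ yₘ` through what remains
after deleting `W` only needs `level yₖ ≤ level xₖ` and `level yₖ ≤ level xₖ₊₁`, so it is enough to
arrange the two multisets of levels, with prescribed first left level and last right level.

The `s + t + 1` lefts that remain contain at most `s - 1` of level `1` and at most one of level `2`,
and the `s + t + 1` rights at most one of level `2` and at most `t` of level `3`. So more lefts than
rights have level `3`, and more rights than lefts have level `1`. Peeling a suitable adjacent pair
off either end of the path keeps this surplus, and reduces the end levels to `3` and `1`; there,
peeling continues until every remaining left is adjacent to every remaining right. The one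
exception, two ends of level `2` and no slack, is a low block followed by a high block, each
complete bipartite.
-/

open Finset

section Zigzag

variable {α β γ δ : Type*}

/-- `[(a₀, b₀), …, (aₙ, bₙ)]` encodes the alternating sequence `a₀ b₀ a₁ b₁ … aₙ bₙ`, each term
related by `R` to its neighbours. -/
def IsZigzag (R : α → β → Prop) (Q : List (α × β)) : Prop :=
  (∀ q ∈ Q, R q.1 q.2) ∧ Q.IsChain fun q q' => R q'.1 q.2

def HasZigzag (R : α → β → Prop) (x : α) (y : β) (A : Multiset α) (B : Multiset β) : Prop :=
  ∃ Q : List (α × β), IsZigzag R Q ∧ (Q.map Prod.fst).head? = some x ∧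
    (Q.map Prod.snd).getLast? = some y ∧ ↑(Q.map Prod.fst) = A ∧ ↑(Q.map Prod.snd) = B

theorem isZigzag_map {R : γ → δ → Prop} {f : α → γ} {g : β → δ} {Q : List (α × β)} :
    IsZigzag R (Q.map (Prod.map f g)) ↔ IsZigzag (fun a b => R (f a) (g b)) Q := by
  simp only [IsZigzag, List.isChain_map, List.forall_mem_map, Prod.map_fst, Prod.map_snd]

theorem Multiset.exists_coe_eq_of_coe_eq_map (f : α → γ) :
    ∀ {s : Multiset α} {ls : List γ}, (ls : Multiset γ) = s.map f →
      ∃ l : List α, (l : Multiset α) = s ∧ l.map f = ls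
  | s, [], h => ⟨[], by simpa [eq_comm] using h, rfl⟩
  | s, c :: ls, h => by
    classical
    obtain ⟨a, ha, rfl⟩ := Multiset.mem_map.1 (by rw [← h]; simp : c ∈ s.map f)
    have hs : s.map f = f a ::ₘ (s.erase a).map f := by
      rw [← Multiset.map_cons, Multiset.cons_erase ha]
    obtain ⟨l, hl, rfl⟩ := exists_coe_eq_of_coe_eq_map f
      (Multiset.cons_inj_right (f a) |>.1 (by rw [← hs, ← h, Multiset.cons_coe]))
    exact ⟨a :: l, by rw [← Multiset.cons_coe, hl, Multiset.cons_erase ha], rfl⟩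

namespace HasZigzag

variable {R : α → β → Prop} {x x' : α} {y y' : β} {A A' : Multiset α} {B B' : Multiset β}

theorem append (h : HasZigzag R x y A B) (h' : HasZigzag R x' y' A' B') (hR : R x' y) :
    HasZigzag R x y' (A + A') (B + B') := by
  obtain ⟨Q, ⟨hQ, hQc⟩, hx, hy, rfl, rfl⟩ := h
  obtain ⟨Q', ⟨hQ', hQc'⟩, hx', hy', rfl, rfl⟩ := h'
  have hne : Q.map Prod.fst ≠ [] := by rintro h; simp [h] at hx
  have hne' : Q'.map Prod.snd ≠ [] := by rintro h; simp [h] at hy'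
  refine ⟨Q ++ Q', ⟨fun q hq => (List.mem_append.1 hq).elim (hQ q) (hQ' q),
    hQc.append hQc' ?_⟩, ?_, ?_, by simp, by simp⟩
  · intro q hq q' hq'
    rw [List.getLast?_map, hq, Option.map_some, Option.some_inj] at hy
    rw [List.head?_map, hq', Option.map_some, Option.some_inj] at hx'
    exact hx' ▸ hy ▸ hR
  · rwa [List.map_append, List.head?_append_of_ne_nil _ hne]
  · rwa [List.map_append, List.getLast?_append_of_ne_nil _ hne']

theorem of_forall (hR : ∀ a ∈ A, ∀ b ∈ B, R a b) (hcard : A.card = B.card) (hx : x ∈ A)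
    (hy : y ∈ B) : HasZigzag R x y A B := by
  classical
  set L := x :: (A.erase x).toList
  set L' := (B.erase y).toList ++ [y]
  have hL : (L : Multiset α) = A := by
    rw [← Multiset.cons_coe, Multiset.coe_toList, Multiset.cons_erase hx]
  have hL' : (L' : Multiset β) = B := by
    rw [Multiset.coe_eq_coe.2 (List.perm_append_singleton _ _), ← Multiset.cons_coe,
      Multiset.coe_toList, Multiset.cons_erase hy]
  have hlen : L.length = L'.length := by
    rw [← Multiset.coe_card, ← Multiset.coe_card, hL, hL', hcard]
  have hmem : ∀ q ∈ L.zip L', q.1 ∈ A ∧ q.2 ∈ B := fun q hq =>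
    ⟨hL ▸ Multiset.mem_coe.2 (List.of_mem_zip hq).1,
      hL' ▸ Multiset.mem_coe.2 (List.of_mem_zip hq).2⟩
  refine ⟨L.zip L', ⟨fun q hq => hR _ (hmem q hq).1 _ (hmem q hq).2, List.Pairwise.isChain <|
    List.pairwise_of_forall_mem_list fun q hq q' hq' => hR _ (hmem q' hq').1 _ (hmem q hq).2⟩,
    ?_, ?_, ?_, ?_⟩
  · simp [List.map_fst_zip hlen.le, L]
  · simp [List.map_snd_zip hlen.ge, L']
  · rw [List.map_fst_zip hlen.le, hL]
  · rw [List.map_snd_zip hlen.ge, hL']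

theorem cons (h : HasZigzag R x' y A B) {b : β} (hb : R x b) (hb' : R x' b) :
    HasZigzag R x y (x ::ₘ A) (b ::ₘ B) := by
  have hxb : HasZigzag R x b {x} {b} := of_forall (by simpa using hb) rfl
    (Multiset.mem_singleton_self x) (Multiset.mem_singleton_self b)
  simpa using hxb.append h hb'

theorem concat (h : HasZigzag R x y' A B) {a : α} (ha : R a y) (ha' : R a y') :
    HasZigzag R x y (a ::ₘ A) (y ::ₘ B) := by
  have hay : HasZigzag R a y {a} {y} := of_forall (by simpa using ha) rfl
    (Multiset.mem_singleton_self a) (Multiset.mem_singleton_self y)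
  rw [← Multiset.singleton_add, ← Multiset.singleton_add, Multiset.add_comm {a} A,
    Multiset.add_comm {y} B]
  exact h.append hay ha'

theorem of_map {R : γ → δ → Prop} {f : α → γ} {g : β → δ} (hx : x ∈ A) (hy : y ∈ B)
    (h : HasZigzag R (f x) (g y) (A.map f) (B.map g)) :
    HasZigzag (fun a b => R (f a) (g b)) x y A B := by
  classical
  obtain ⟨P, hP, hhead, hlast, hfst, hsnd⟩ := h
  obtain ⟨ls, hls⟩ := List.head?_eq_some_iff.1 hhead
  obtain ⟨ls', hls'⟩ := List.getLast?_eq_some_iff.1 hlast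
  obtain ⟨l, hl, hlf⟩ := Multiset.exists_coe_eq_of_coe_eq_map f (s := A.erase x) (ls := ls) <| by
    rw [Multiset.map_erase_of_mem _ _ hx, ← hfst, hls, ← Multiset.cons_coe,
      Multiset.erase_cons_head]
  obtain ⟨l', hl', hlg⟩ := Multiset.exists_coe_eq_of_coe_eq_map g (s := B.erase y) (ls := ls') <| by
    rw [Multiset.map_erase_of_mem _ _ hy, ← hsnd, hls',
      Multiset.coe_eq_coe.2 (List.perm_append_singleton _ _), ← Multiset.cons_coe,
      Multiset.erase_cons_head]
  have hL : (x :: l).map f = P.map Prod.fst := by simp [hlf, hls]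
  have hL' : (l' ++ [y]).map g = P.map Prod.snd := by simp [hlg, hls']
  have hlen : (x :: l).length = (l' ++ [y]).length := by
    rw [← List.length_map (f := f), ← List.length_map (f := g), hL, hL', List.length_map,
      List.length_map]
  refine ⟨(x :: l).zip (l' ++ [y]), ?_, ?_, ?_, ?_, ?_⟩
  · rwa [← isZigzag_map, ← List.zip_map, hL, hL', ← List.zip_of_prod rfl rfl]
  · simp [List.map_fst_zip hlen.le]
  · simp [List.map_snd_zip hlen.ge]
  · rw [List.map_fst_zip hlen.le, ← Multiset.cons_coe, hl, Multiset.cons_erase hx]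
  · rw [List.map_snd_zip hlen.ge, Multiset.coe_eq_coe.2 (List.perm_append_singleton _ _),
      ← Multiset.cons_coe, hl', Multiset.cons_erase hy]

end HasZigzag

theorem SimpleGraph.exists_isHamiltonian_induce_of_isChain {V : Type*} [DecidableEq V]
    {G : SimpleGraph V} {S : Set V} {l : List V} (hl : l.IsChain G.Adj) (hnd : l.Nodup)
    (hS : ∀ v, v ∈ l ↔ v ∈ S) {u v : V} (hu : l.head? = some u) (hv : l.getLast? = some v)
    (hu' : u ∈ S) (hv' : v ∈ S) :
    ∃ w : (G.induce S).Walk ⟨u, hu'⟩ ⟨v, hv'⟩, w.IsHamiltonian := by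
  have hne : l ≠ [] := by rintro rfl; simp at hu
  obtain rfl : l.head hne = u := by simpa [List.head?_eq_some_head hne] using hu
  obtain rfl : l.getLast hne = v := by simpa [List.getLast?_eq_some_getLast hne] using hv
  have hsupp : (Walk.ofSupport l hne hl).support = l := Walk.support_ofSupport hne hl
  refine ⟨(Walk.ofSupport l hne hl).induce S fun z hz => (hS z).1 (hsupp ▸ hz), ?_⟩
  refine Walk.IsPath.isHamiltonian_of_mem (Walk.IsPath.mk' ?_) fun z => ?_
  · rw [Walk.support_induce]
    exact List.Nodup.of_map Subtype.val (by simpa [hsupp] using hnd)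
  · simpa [Walk.support_induce, hsupp] using (hS z).2 z.2

theorem List.perm_flatMap_pair {V : Type*} (f g : α → V) :
    ∀ l : List α, (l.flatMap fun a => [f a, g a]).Perm (l.map f ++ l.map g)
  | [] => .nil
  | a :: l => by
    simpa using (((perm_flatMap_pair f g l).cons (g a)).trans List.perm_middle.symm).cons (f a)

theorem IsZigzag.isChain_crossGraph {R : α → β → Prop} :
    ∀ {Q : List (α × β)}, IsZigzag R Q →
      (Q.flatMap fun q => [Sum.inl q.1, Sum.inr q.2]).IsChain (crossGraph R).Adj
  | [], _ => by simp
  | q :: Q, ⟨hQ, hQc⟩ => by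
    have ih := isChain_crossGraph (Q := Q) ⟨fun q' hq' => hQ q' (by simp [hq']), hQc.tail⟩
    refine List.isChain_cons_cons.2 ⟨hQ q (by simp), List.isChain_cons.2 ⟨?_, ih⟩⟩
    cases Q with
    | nil => simp
    | cons q' Q =>
      rintro z hz
      obtain rfl : Sum.inl q'.1 = z := by simpa using hz
      exact (List.isChain_cons_cons.1 hQc).1

theorem HasZigzag.exists_isHamiltonian [DecidableEq α] [DecidableEq β] {R : α → β → Prop}
    {S : Set (α ⊕ β)} {A : Finset α} {B : Finset β} (hA : ∀ a, Sum.inl a ∈ S ↔ a ∈ A)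
    (hB : ∀ b, Sum.inr b ∈ S ↔ b ∈ B) {x : α} {y : β} (hx : Sum.inl x ∈ S)
    (hy : Sum.inr y ∈ S) (h : HasZigzag R x y A.val B.val) :
    ∃ w : ((crossGraph R).induce S).Walk ⟨Sum.inl x, hx⟩ ⟨Sum.inr y, hy⟩, w.IsHamiltonian := by
  obtain ⟨Q, hQ, hhead, hlast, hfst, hsnd⟩ := h
  have hperm := List.perm_flatMap_pair (fun q : α × β => Sum.inl q.1)
    (fun q : α × β => Sum.inr (α := α) q.2) Q
  refine SimpleGraph.exists_isHamiltonian_induce_of_isChain hQ.isChain_crossGraph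
    (hperm.nodup_iff.2 ?_) (fun v => ?_) ?_ ?_ hx hy
  · have hnd := Multiset.coe_nodup.1 (hfst ▸ A.nodup)
    have hnd' := Multiset.coe_nodup.1 (hsnd ▸ B.nodup)
    refine List.nodup_append.2 ⟨?_, ?_, by simp⟩
    · simpa [Function.comp_def] using hnd.map Sum.inl_injective
    · simpa [Function.comp_def] using hnd'.map Sum.inr_injective
  · rw [hperm.mem_iff]
    rcases v with a | b
    · simp [hA, ← Finset.mem_val, ← hfst]
    · simp [hB, ← Finset.mem_val, ← hsnd]
  · cases Q with
    | nil => simp at hhead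
    | cons q Q => simpa using hhead
  · obtain ⟨Q, q, rfl⟩ | rfl := Q.eq_nil_or_concat'.symm
    · simpa using hlast
    · simp at hlast

end Zigzag

section ThreeLevels

def threeLevels (a₁ a₂ a₃ : ℕ) : Multiset ℕ :=
  Multiset.replicate a₁ 1 + Multiset.replicate a₂ 2 + Multiset.replicate a₃ 3

variable {a₁ a₂ a₃ b₁ b₂ b₃ c cx cy : ℕ}

theorem mem_threeLevels :
    c ∈ threeLevels a₁ a₂ a₃ ↔ c = 1 ∧ 0 < a₁ ∨ c = 2 ∧ 0 < a₂ ∨ c = 3 ∧ 0 < a₃ := by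
  simp only [threeLevels, Multiset.mem_add, Multiset.mem_replicate]
  omega

theorem card_threeLevels : (threeLevels a₁ a₂ a₃).card = a₁ + a₂ + a₃ := by
  simp [threeLevels]

theorem threeLevels_add :
    threeLevels a₁ a₂ a₃ + threeLevels b₁ b₂ b₃ = threeLevels (a₁ + b₁) (a₂ + b₂) (a₃ + b₃) := by
  simp only [threeLevels, Multiset.replicate_add]
  abel

theorem threeLevels_succ_one : threeLevels (a₁ + 1) a₂ a₃ = 1 ::ₘ threeLevels a₁ a₂ a₃ := by
  simp [threeLevels, Multiset.replicate_succ]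

theorem threeLevels_succ_two : threeLevels a₁ (a₂ + 1) a₃ = 2 ::ₘ threeLevels a₁ a₂ a₃ := by
  simp [threeLevels, Multiset.replicate_succ]

theorem threeLevels_succ_three : threeLevels a₁ a₂ (a₃ + 1) = 3 ::ₘ threeLevels a₁ a₂ a₃ := by
  simp [threeLevels, Multiset.replicate_succ]

theorem eq_threeLevels_count {m : Multiset ℕ} (hm : ∀ c ∈ m, 1 ≤ c ∧ c ≤ 3) :
    m = threeLevels (m.count 1) (m.count 2) (m.count 3) := by
  ext c
  simp only [threeLevels, Multiset.count_add, Multiset.count_replicate]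
  by_cases hc : c ∈ m
  · obtain ⟨h₁, h₃⟩ := hm c hc
    interval_cases c <;> simp
  · have := Multiset.count_eq_zero.2 hc
    split_ifs <;> subst_vars <;> omega

theorem card_eq_count_add_count_add_count {m : Multiset ℕ} (hm : ∀ c ∈ m, 1 ≤ c ∧ c ≤ 3) :
    m.card = m.count 1 + m.count 2 + m.count 3 := by
  conv_lhs => rw [eq_threeLevels_count hm]
  exact card_threeLevels

structure LevelSurplus (a₁ a₂ a₃ b₁ b₂ b₃ : ℕ) : Prop where
  top : b₃ < a₃
  bottom : a₁ < b₁
  card_eq : a₁ + a₂ + a₃ = b₁ + b₂ + b₃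

theorem hasZigzag_three_one {a₁ a₂ a₃ b₁ b₂ b₃ : ℕ} (h : LevelSurplus a₁ a₂ a₃ b₁ b₂ b₃) :
    HasZigzag (· ≥ ·) 3 1 (threeLevels a₁ a₂ a₃) (threeLevels b₁ b₂ b₃) := by
  obtain ⟨h₃, h₁, hcard⟩ := h
  by_cases hb₃ : 0 < b₃
  · obtain ⟨b₃, rfl⟩ := Nat.exists_eq_add_one.2 hb₃
    obtain ⟨a₃, rfl⟩ := Nat.exists_eq_add_one.2 (by omega : 0 < a₃)
    rw [threeLevels_succ_three, threeLevels_succ_three]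
    exact (hasZigzag_three_one ⟨by omega, h₁, by omega⟩).cons le_rfl le_rfl
  by_cases ha₁ : 0 < a₁
  · obtain ⟨a₁, rfl⟩ := Nat.exists_eq_add_one.2 ha₁
    obtain ⟨b₁, rfl⟩ := Nat.exists_eq_add_one.2 (by omega : 0 < b₁)
    rw [threeLevels_succ_one, threeLevels_succ_one]
    exact (hasZigzag_three_one ⟨h₃, by omega, by omega⟩).concat le_rfl le_rfl
  refine HasZigzag.of_forall (fun a ha b hb => ?_) (by simp [card_threeLevels, hcard])
    (mem_threeLevels.2 (by omega)) (mem_threeLevels.2 (by omega))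
  rw [mem_threeLevels] at ha hb
  omega
termination_by b₃ + a₁

theorem hasZigzag_three_two (h : LevelSurplus a₁ a₂ a₃ b₁ b₂ b₃) (hb₂ : 0 < b₂) :
    HasZigzag (· ≥ ·) 3 2 (threeLevels a₁ a₂ a₃) (threeLevels b₁ b₂ b₃) := by
  obtain ⟨h₃, h₁, hcard⟩ := h
  obtain ⟨b₂, rfl⟩ := Nat.exists_eq_add_one.2 hb₂
  rw [threeLevels_succ_two (a₂ := b₂)]
  by_cases ha₂ : 0 < a₂
  · obtain ⟨a₂, rfl⟩ := Nat.exists_eq_add_one.2 ha₂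
    rw [threeLevels_succ_two]
    exact (hasZigzag_three_one ⟨h₃, h₁, by omega⟩).concat le_rfl (by norm_num)
  · obtain ⟨a₃, rfl⟩ := Nat.exists_eq_add_one.2 (by omega : 0 < a₃)
    rw [threeLevels_succ_three]
    exact (hasZigzag_three_one ⟨by omega, h₁, by omega⟩).concat (by norm_num) (by norm_num)

theorem hasZigzag_two_one (h : LevelSurplus a₁ a₂ a₃ b₁ b₂ b₃) (ha₂ : 0 < a₂) :
    HasZigzag (· ≥ ·) 2 1 (threeLevels a₁ a₂ a₃) (threeLevels b₁ b₂ b₃) := by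
  obtain ⟨h₃, h₁, hcard⟩ := h
  obtain ⟨a₂, rfl⟩ := Nat.exists_eq_add_one.2 ha₂
  rw [threeLevels_succ_two]
  by_cases hb₂ : 0 < b₂
  · obtain ⟨b₂, rfl⟩ := Nat.exists_eq_add_one.2 hb₂
    rw [threeLevels_succ_two]
    exact (hasZigzag_three_one ⟨h₃, h₁, by omega⟩).cons le_rfl (by norm_num)
  · obtain ⟨b₁, rfl⟩ := Nat.exists_eq_add_one.2 (by omega : 0 < b₁)
    rw [threeLevels_succ_one]
    exact (hasZigzag_three_one ⟨h₃, by omega, by omega⟩).cons (by norm_num) (by norm_num)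

theorem hasZigzag_two_two (h : LevelSurplus a₁ a₂ a₃ b₁ b₂ b₃) (ha₂ : 0 < a₂) (hb₂ : 0 < b₂) :
    HasZigzag (· ≥ ·) 2 2 (threeLevels a₁ a₂ a₃) (threeLevels b₁ b₂ b₃) := by
  obtain ⟨h₃, h₁, hcard⟩ := h
  obtain ⟨a₂, rfl⟩ := Nat.exists_eq_add_one.2 ha₂
  rw [threeLevels_succ_two]
  by_cases hb₁ : a₁ + 2 ≤ b₁
  · obtain ⟨b₁, rfl⟩ := Nat.exists_eq_add_one.2 (by omega : 0 < b₁)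
    rw [threeLevels_succ_one]
    exact (hasZigzag_three_two ⟨h₃, by omega, by omega⟩ hb₂).cons (by norm_num) (by norm_num)
  by_cases hb₂' : 2 ≤ b₂
  · obtain ⟨b₂, rfl⟩ := Nat.exists_eq_add_one.2 hb₂
    rw [threeLevels_succ_two]
    exact (hasZigzag_three_two ⟨h₃, h₁, by omega⟩ (by omega)).cons le_rfl (by norm_num)
  obtain rfl : a₂ = 0 := by omega
  obtain rfl : b₂ = 1 := by omega
  obtain rfl : b₁ = a₁ + 1 := by omega
  obtain rfl : a₃ = b₃ + 1 := by omega
  have hlow : HasZigzag (· ≥ ·) 2 1 (threeLevels a₁ 1 0) (threeLevels (a₁ + 1) 0 0) := by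
    refine HasZigzag.of_forall (fun a ha b hb => ?_) (by simp [card_threeLevels])
      (mem_threeLevels.2 (by omega)) (mem_threeLevels.2 (by omega))
    rw [mem_threeLevels] at ha hb
    omega
  have hhigh : HasZigzag (· ≥ ·) 3 2 (threeLevels 0 0 (b₃ + 1)) (threeLevels 0 1 b₃) := by
    refine HasZigzag.of_forall (fun a ha b hb => ?_) (by simp [card_threeLevels, add_comm])
      (mem_threeLevels.2 (by omega)) (mem_threeLevels.2 (by omega))
    rw [mem_threeLevels] at ha hb
    omega
  simpa [threeLevels_add, threeLevels_succ_two] using hlow.append hhigh (by norm_num)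

theorem hasZigzag_threeLevels_of_two_le_of_le_two (h : LevelSurplus a₁ a₂ a₃ b₁ b₂ b₃)
    (hx : cx ∈ threeLevels a₁ a₂ a₃) (hy : cy ∈ threeLevels b₁ b₂ b₃) (hcx : 2 ≤ cx)
    (hcy : cy ≤ 2) : HasZigzag (· ≥ ·) cx cy (threeLevels a₁ a₂ a₃) (threeLevels b₁ b₂ b₃) := by
  rw [mem_threeLevels] at hx hy
  obtain ⟨rfl, ha₂⟩ | rfl : cx = 2 ∧ 0 < a₂ ∨ cx = 3 := by omega
  · obtain rfl | ⟨rfl, hb₂⟩ : cy = 1 ∨ cy = 2 ∧ 0 < b₂ := by omega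
    · exact hasZigzag_two_one h ha₂
    · exact hasZigzag_two_two h ha₂ hb₂
  · obtain rfl | ⟨rfl, hb₂⟩ : cy = 1 ∨ cy = 2 ∧ 0 < b₂ := by omega
    · exact hasZigzag_three_one h
    · exact hasZigzag_three_two h hb₂

theorem hasZigzag_threeLevels_of_le_two (h : LevelSurplus a₁ a₂ a₃ b₁ b₂ b₃)
    (hx : cx ∈ threeLevels a₁ a₂ a₃) (hy : cy ∈ threeLevels b₁ b₂ b₃) (hcy : cy ≤ 2) :
    HasZigzag (· ≥ ·) cx cy (threeLevels a₁ a₂ a₃) (threeLevels b₁ b₂ b₃) := by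
  by_cases hx₁ : cx = 1
  · subst hx₁
    obtain ⟨h₃, h₁, hcard⟩ := h
    rw [mem_threeLevels] at hx hy
    obtain ⟨a₁, rfl⟩ := Nat.exists_eq_add_one.2 (by omega : 0 < a₁)
    obtain ⟨b₁, rfl⟩ := Nat.exists_eq_add_one.2 (by omega : 0 < b₁)
    rw [threeLevels_succ_one, threeLevels_succ_one]
    exact (hasZigzag_threeLevels_of_two_le_of_le_two (cx := 3) ⟨h₃, by omega, by omega⟩
      (mem_threeLevels.2 (by omega)) (mem_threeLevels.2 (by omega)) (by norm_num) hcy).cons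
      le_rfl (by norm_num)
  · exact hasZigzag_threeLevels_of_two_le_of_le_two h hx hy
      (by rw [mem_threeLevels] at hx; omega) hcy

theorem hasZigzag_threeLevels (h : LevelSurplus a₁ a₂ a₃ b₁ b₂ b₃)
    (hx : cx ∈ threeLevels a₁ a₂ a₃) (hy : cy ∈ threeLevels b₁ b₂ b₃) :
    HasZigzag (· ≥ ·) cx cy (threeLevels a₁ a₂ a₃) (threeLevels b₁ b₂ b₃) := by
  by_cases hy₃ : cy = 3
  · subst hy₃
    obtain ⟨h₃, h₁, hcard⟩ := h
    rw [mem_threeLevels] at hx hy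
    obtain ⟨b₃, rfl⟩ := Nat.exists_eq_add_one.2 (by omega : 0 < b₃)
    obtain ⟨a₃, rfl⟩ := Nat.exists_eq_add_one.2 (by omega : 0 < a₃)
    rw [threeLevels_succ_three, threeLevels_succ_three]
    exact (hasZigzag_threeLevels_of_le_two (cy := 1) ⟨by omega, h₁, by omega⟩
      (mem_threeLevels.2 (by omega)) (mem_threeLevels.2 (by omega)) (by norm_num)).concat
      le_rfl (by norm_num)
  · exact hasZigzag_threeLevels_of_le_two h hx hy (by rw [mem_threeLevels] at hy; omega)

theorem hasZigzag_of_count_lt {A B : Multiset ℕ} (hA : ∀ c ∈ A, 1 ≤ c ∧ c ≤ 3)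
    (hB : ∀ c ∈ B, 1 ≤ c ∧ c ≤ 3) (hcard : A.card = B.card) (h₃ : B.count 3 < A.count 3)
    (h₁ : A.count 1 < B.count 1) (hx : cx ∈ A) (hy : cy ∈ B) : HasZigzag (· ≥ ·) cx cy A B := by
  rw [card_eq_count_add_count_add_count hA, card_eq_count_add_count_add_count hB] at hcard
  rw [eq_threeLevels_count hA] at hx ⊢
  rw [eq_threeLevels_count hB] at hy ⊢
  exact hasZigzag_threeLevels ⟨h₃, h₁, hcard⟩ hx hy

end ThreeLevels

section MgraphMinus

theorem card_filter_notMem {ι V : Type*} [Fintype ι] [DecidableEq V] {f : ι → V}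
    (hf : Function.Injective f) (W : Finset V) :
    #{i | f i ∉ W} = Fintype.card ι - #(W ∩ univ.image f) := by
  have hW : W ∩ univ.image f = ({i | f i ∈ W} : Finset ι).image f := by
    ext v
    simp only [mem_inter, mem_image, mem_univ, true_and, mem_filter]
    constructor
    · rintro ⟨hv, i, rfl⟩
      exact ⟨i, hv, rfl⟩
    · rintro ⟨i, hv, rfl⟩
      exact ⟨hv, i, rfl⟩
  rw [hW, card_image_of_injective _ hf, ← card_univ,
    ← card_filter_add_card_filter_not (s := univ) (fun i => f i ∈ W)]
  omega

theorem count_map_le_card {n : ℕ} (A : Finset (Fin n)) (f : Fin n → ℕ) {c : ℕ} {T : Finset ℕ}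
    (hT : ∀ i : Fin n, f i = c → (i : ℕ) ∈ T) : (A.val.map f).count c ≤ #T := by
  rw [Multiset.count_map]
  change #(A.filter fun i => c = f i) ≤ #T
  exact card_le_card_of_injOn Fin.val (fun i hi => hT i (mem_filter.1 hi).2.symm)
    Fin.val_injective.injOn

variable {n : ℕ}

theorem count_map_nClass_le (a b : ℕ) (A : Finset (Fin n)) :
    (A.val.map fun i : Fin n => nClass a b i).count 1 ≤ a ∧
      (A.val.map fun i : Fin n => nClass a b i).count 2 ≤ b ∧
      (A.val.map fun i : Fin n => nClass a b i).count 3 ≤ n - (a + b) := by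
  refine ⟨?_, ?_, ?_⟩
  · simpa using count_map_le_card A _ (T := range a) fun i hi => by
      unfold nClass at hi; simp only [mem_range]; split_ifs at hi <;> omega
  · simpa using count_map_le_card A _ (T := Ico a (a + b)) fun i hi => by
      unfold nClass at hi; simp only [mem_Ico]; split_ifs at hi <;> omega
  · simpa using count_map_le_card A _ (T := Ico (a + b) n) fun i hi => by
      unfold nClass at hi; simp only [mem_Ico]; split_ifs at hi <;> omega

theorem forall_mem_map_nClass (a b : ℕ) (A : Finset (Fin n)) :
    ∀ c ∈ A.val.map fun i : Fin n => nClass a b i, 1 ≤ c ∧ c ≤ 3 := by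
  simp only [Multiset.mem_map, mem_val]
  rintro c ⟨i, -, rfl⟩
  unfold nClass
  split_ifs <;> omega

theorem hasZigzag_nClass {s t : ℕ} (hs : 1 ≤ s) {A B : Finset (Fin n)} (hA : #A = s + t + 1)
    (hB : #B = s + t + 1) {i j : Fin n} (hi : i ∈ A) (hj : j ∈ B) :
    HasZigzag (fun i j : Fin n => nClass (n - t - 1) 1 j ≤ nClass (s - 1) 1 i) i j A.val B.val := by
  refine HasZigzag.of_map (R := (· ≥ ·)) (f := fun i : Fin n => nClass (s - 1) 1 i)
    (g := fun j : Fin n => nClass (n - t - 1) 1 j) hi hj ?_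
  have hAn : #A ≤ n := card_le_univ A |>.trans_eq (Fintype.card_fin n)
  have hcardA := card_eq_count_add_count_add_count (forall_mem_map_nClass (s - 1) 1 A)
  have hcardB := card_eq_count_add_count_add_count (forall_mem_map_nClass (n - t - 1) 1 B)
  rw [Multiset.card_map, card_val] at hcardA hcardB
  obtain ⟨hA₁, hA₂, -⟩ := count_map_nClass_le (s - 1) 1 A
  obtain ⟨-, hB₂, hB₃⟩ := count_map_nClass_le (n - t - 1) 1 B
  exact hasZigzag_of_count_lt (forall_mem_map_nClass _ _ A) (forall_mem_map_nClass _ _ B)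
    (by simp [hA, hB]) (by omega) (by omega) (Multiset.mem_map_of_mem _ hi)
    (Multiset.mem_map_of_mem _ hj)

end MgraphMinus

theorem stmt15_general (n s t p : ℕ) (hs : 2 ≤ s) (hn : n = s + t + p + 1) :
    TwoPHamBic (MgraphMinus n s t)
      (Finset.univ.image Sum.inl) (Finset.univ.image Sum.inr) p := by
  intro W hWX hWY _ hx _ hy hxW hyW
  obtain ⟨i, -, rfl⟩ := Finset.mem_image.1 hx
  obtain ⟨j, -, rfl⟩ := Finset.mem_image.1 hy
  set A : Finset (Fin n) := {i | Sum.inl i ∉ W}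
  set B : Finset (Fin n) := {j | Sum.inr j ∉ W}
  have hA : #A = s + t + 1 := by
    rw [card_filter_notMem Sum.inl_injective, hWX, Fintype.card_fin]; omega
  have hB : #B = s + t + 1 := by
    rw [card_filter_notMem Sum.inr_injective, hWY, Fintype.card_fin]; omega
  have hi : i ∈ A := by simpa [A]
  have hj : j ∈ B := by simpa [B]
  exact HasZigzag.exists_isHamiltonian (by simp [A]) (by simp [B]) hxW hyW
    (hasZigzag_nClass (by omega) hA hB hi hj)

/-- For `p ≥ 0`, `s ≥ 2`, `t ≥ 1`, and `n = s + t + p + 1`, the graph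
`M_{n,n}^{s,t;−}` is `2p`-Hamilton-biconnected. -/
theorem stmt15 (n s t p : ℕ) (hs : 2 ≤ s) (ht : 1 ≤ t) (hn : n = s + t + p + 1) :
    TwoPHamBic (MgraphMinus n s t)
      (Finset.univ.image Sum.inl) (Finset.univ.image Sum.inr) p :=
  stmt15_general n s t p hs hn
end

section
/- Let G be a balanced bipartite graph of order 2n with minimum degree δ(G) ≥ k, where 1 ≤ k ≤ (n−2)/3. If e(G) > n(n−k) + k², then G is Hamiltonian. -/
/-!
Bipartite closure argument in the style of Moon and Moser. Let `p` be a Hamiltonian path from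
`u ∈ X` to `v` in a non-Hamiltonian balanced bipartite graph on `2n` vertices. If `u ~ pᵢ₊₁` and
`v ~ pᵢ`, rotating the path gives a Hamiltonian cycle; so the positions `i` with `u ~ pᵢ₊₁` and
those with `v ~ pᵢ` are disjoint, and by parity all of them are even positions below `2n - 1`.
Hence `d(u) + d(v) ≤ n`.

Suppose `G` is not Hamiltonian and let `H ≥ G` be a maximal non-Hamiltonian graph that is bipartite
with respect to `X, Y`. Adding a missing edge `xy` makes `H` Hamiltonian, which gives a Hamiltonian
`x`–`y` path in `H`, so `d(x) + d(y) ≤ n`. Since `K_{n,n}` contains `C_{2n}`, such an `x` and `y`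
exist; choose them with `k ≤ d(x) ≤ n / 2`. Summing degrees over `Y` gives
`e(H) ≤ d(x) n + (n - d(x))² ≤ n (n - k) + k²`, which contradicts `e(G) > n (n - k) + k²`.
-/

open Finset
open scoped List

namespace SimpleGraph

variable {V : Type*} {G H : SimpleGraph V} {u v w w' : V}

namespace Walk

lemma IsHamiltonian.of_perm [DecidableEq V] {p : G.Walk u v} {q : G.Walk w w'}
    (hp : p.IsHamiltonian) (h : q.support ~ p.support) : q.IsHamiltonian :=
  fun x => (h.count_eq x).trans (hp x)

lemma IsHamiltonian.isHamiltonianCycle_cons [Fintype V] [DecidableEq V] {p : G.Walk u v}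
    (hp : p.IsHamiltonian) (h : G.Adj v u) (hV : 3 ≤ Fintype.card V) :
    (cons h p).IsHamiltonianCycle := by
  rw [isHamiltonianCycle_iff_isCycle_and_length_eq, cons_isCycle_iff, length_cons, hp.length_eq]
  refine ⟨⟨hp.isPath, fun he => ?_⟩, by omega⟩
  have := hp.isPath.length_eq_one_of_mem_edges (Sym2.eq_swap ▸ he)
  rw [hp.length_eq] at this
  omega

lemma IsHamiltonian.degree_le_card_adj_getVert_succ [Fintype V] [DecidableEq V]
    [DecidableRel G.Adj] {p : G.Walk u v} (hp : p.IsHamiltonian) :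
    G.degree u ≤ #{i ∈ range p.length | G.Adj u (p.getVert (i + 1))} := by
  rw [← card_neighborFinset_eq_degree]
  refine (card_le_card fun w hw => ?_).trans (card_image_le (f := fun i => p.getVert (i + 1)))
  obtain ⟨m, rfl, hm⟩ := mem_support_iff_exists_getVert.mp (hp.mem_support w)
  rw [mem_neighborFinset] at hw
  obtain ⟨i, rfl⟩ : ∃ i, m = i + 1 :=
    Nat.exists_eq_add_one.mpr (Nat.pos_of_ne_zero fun h => hw.ne (by rw [h, getVert_zero]))
  exact mem_image.mpr ⟨i, mem_filter.mpr ⟨mem_range.mpr (by omega), hw⟩, rfl⟩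

lemma IsHamiltonian.degree_le_card_adj_getVert [Fintype V] [DecidableEq V] [DecidableRel G.Adj]
    {p : G.Walk u v} (hp : p.IsHamiltonian) :
    G.degree v ≤ #{i ∈ range p.length | G.Adj v (p.getVert i)} := by
  rw [← card_neighborFinset_eq_degree]
  refine (card_le_card fun w hw => ?_).trans (card_image_le (f := p.getVert))
  obtain ⟨m, rfl, hm⟩ := mem_support_iff_exists_getVert.mp (hp.mem_support w)
  rw [mem_neighborFinset] at hw
  have : m ≠ p.length := fun h => hw.ne (by rw [h, getVert_length])
  exact mem_image.mpr ⟨m, mem_filter.mpr ⟨mem_range.mpr (by omega), hw⟩, rfl⟩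

lemma IsHamiltonianCycle.reverse [Fintype V] [DecidableEq V] {c : G.Walk u u}
    (hc : c.IsHamiltonianCycle) : c.reverse.IsHamiltonianCycle := by
  rw [isHamiltonianCycle_iff_isCycle_and_length_eq] at hc ⊢
  exact ⟨hc.1.reverse, by rw [length_reverse, hc.2]⟩

lemma IsCycle.eq_snd_or_eq_penultimate_of_mem_edges {c : G.Walk u u} (hc : c.IsCycle)
    (h : s(u, w) ∈ c.edges) : w = c.snd ∨ w = c.penultimate := by
  rw [← cons_tail_eq c hc.not_nil, edges_cons, List.mem_cons] at h
  rcases h with h | h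
  · left
    obtain h | ⟨hu, rfl⟩ := by simpa using h
    exacts [h, hu]
  · right
    rw [hc.isPath_tail.eq_penultimate_of_mem_edges h, penultimate, penultimate, length_tail,
      getVert_tail]
    have := hc.three_le_length
    congr 1
    omega

lemma edges_subset_edgeSet_of_sup_edge {p : (H ⊔ edge u v).Walk w w'}
    (hp : s(u, v) ∉ p.edges) : ∀ e ∈ p.edges, e ∈ H.edgeSet := by
  intro e he
  have := p.edges_subset_edgeSet he
  rw [edgeSet_sup] at this
  exact this.resolve_right fun h => hp (edgeSet_edge_subset h ▸ he)

lemma IsHamiltonianCycle.exists_isHamiltonian_of_snd_eq [DecidableEq V]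
    {c : (H ⊔ edge u v).Walk u u} (hc : c.IsHamiltonianCycle) (hv : c.snd = v) :
    ∃ p : H.Walk v u, p.IsHamiltonian := by
  have hnodup := hc.isCycle.edges_nodup
  rw [← cons_tail_eq c hc.isCycle.not_nil, edges_cons, List.nodup_cons,
    show s(u, c.snd) = s(u, v) by rw [hv]] at hnodup
  refine ⟨(c.tail.transfer H (edges_subset_edgeSet_of_sup_edge hnodup.1)).copy hv rfl, ?_⟩
  simpa [IsHamiltonian] using hc.isHamiltonian_tail

end Walk

open Walk

/-- Pósa rotation: the path `u ⋯ pᵢ pᵢ₊₁ ⋯ v` is rearranged into the cycle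
`pᵢ₊₁ ⋯ v pᵢ ⋯ u pᵢ₊₁`. -/
theorem isHamiltonian_of_adj_getVert [Fintype V] [DecidableEq V] {p : G.Walk u v}
    (hp : p.IsHamiltonian) (hV : 3 ≤ Fintype.card V) {i : ℕ} (hi : i < p.length)
    (hu : G.Adj u (p.getVert (i + 1))) (hv : G.Adj v (p.getVert i)) : G.IsHamiltonian := by
  let q := (p.drop (i + 1)).append (cons hv (p.take i).reverse)
  have hq : q.IsHamiltonian := by
    refine hp.of_perm ?_
    rw [support_append, support_cons, List.tail_cons, support_reverse,
      drop_support_eq_support_drop_min, support_take, min_eq_left hi]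
    calc _ ~ (p.support.take (i + 1)).reverse ++ p.support.drop (i + 1) := List.perm_append_comm
      _ ~ p.support.take (i + 1) ++ p.support.drop (i + 1) := (List.reverse_perm _).append_right _
      _ = p.support := p.support.take_append_drop (i + 1)
  exact fun _ => ⟨_, _, hq.isHamiltonianCycle_cons hu hV⟩

theorem exists_isHamiltonian_walk_of_isHamiltonian_sup_edge [Fintype V] [DecidableEq V]
    [Nontrivial V] (hH : ¬H.IsHamiltonian) (h : (H ⊔ edge u v).IsHamiltonian) :
    ∃ p : H.Walk v u, p.IsHamiltonian := by
  obtain ⟨c, hc⟩ := h.exists_isHamiltonianCycle u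
  by_cases he : s(u, v) ∈ c.edges
  · rcases hc.isCycle.eq_snd_or_eq_penultimate_of_mem_edges he with hv | hv
    · exact hc.exists_isHamiltonian_of_snd_eq hv.symm
    · exact hc.reverse.exists_isHamiltonian_of_snd_eq (by rw [snd_reverse, ← hv])
  · refine absurd (fun _ => ⟨u, c.transfer H (edges_subset_edgeSet_of_sup_edge he), ?_⟩) hH
    rw [isHamiltonianCycle_iff_isCycle_and_length_eq, length_transfer]
    rw [isHamiltonianCycle_iff_isCycle_and_length_eq] at hc
    exact ⟨hc.1.transfer _, hc.2⟩

variable {s t : Set V}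

lemma IsBipartiteWith.getVert_mem (h : G.IsBipartiteWith s t) (p : G.Walk u v) (hu : u ∈ s)
    {i : ℕ} (hi : i ≤ p.length) :
    Even i ∧ p.getVert i ∈ s ∨ Odd i ∧ p.getVert i ∈ t := by
  induction i with
  | zero => simpa using hu
  | succ i ih =>
    have hadj := p.adj_getVert_succ (by omega : i < p.length)
    rcases ih (by omega) with ⟨he, hs⟩ | ⟨ho, ht⟩
    · exact Or.inr ⟨he.add_one, h.mem_of_mem_adj hs hadj⟩
    · exact Or.inl ⟨ho.add_one, h.mem_of_mem_adj' ht hadj.symm⟩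

lemma IsBipartiteWith.even_of_getVert_mem (h : G.IsBipartiteWith s t) (p : G.Walk u v)
    (hu : u ∈ s) {i : ℕ} (hi : i ≤ p.length) (hs : p.getVert i ∈ s) : Even i := by
  rcases h.getVert_mem p hu hi with ⟨he, -⟩ | ⟨-, ht⟩
  exacts [he, absurd ht (Set.disjoint_left.mp h.disjoint hs)]

lemma IsBipartiteWith.odd_of_getVert_mem (h : G.IsBipartiteWith s t) (p : G.Walk u v)
    (hu : u ∈ s) {i : ℕ} (hi : i ≤ p.length) (ht : p.getVert i ∈ t) : Odd i := by
  rcases h.getVert_mem p hu hi with ⟨-, hs⟩ | ⟨ho, -⟩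
  exacts [absurd ht (Set.disjoint_left.mp h.disjoint hs), ho]

theorem IsBipartiteWith.degree_add_degree_le_of_isHamiltonian [Fintype V] [DecidableEq V]
    [DecidableRel G.Adj] (h : G.IsBipartiteWith s t) {n : ℕ} (hV : Fintype.card V = 2 * n)
    (hn : 2 ≤ n) (hG : ¬G.IsHamiltonian) {p : G.Walk u v} (hp : p.IsHamiltonian) (hu : u ∈ s) :
    G.degree u + G.degree v ≤ n := by
  have hL : p.length = 2 * n - 1 := by rw [hp.length_eq, hV]
  have hv : v ∈ t := by
    rcases h.getVert_mem p hu le_rfl with ⟨he, -⟩ | ⟨-, ht⟩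
    · exact absurd he (by rw [hL, Nat.not_even_iff_odd]; exact ⟨n - 1, by omega⟩)
    · rwa [getVert_length] at ht
  set S := {i ∈ range p.length | G.Adj u (p.getVert (i + 1))}
  set T := {i ∈ range p.length | G.Adj v (p.getVert i)}
  have hST : Disjoint S T := Finset.disjoint_left.mpr fun i hiS hiT => by
    rw [mem_filter, mem_range] at hiS hiT
    exact hG (isHamiltonian_of_adj_getVert hp (by omega) hiS.1 hiS.2 hiT.2)
  have hsub : S ∪ T ⊆ (range n).image (2 * ·) := by
    intro i hi
    rw [mem_union, mem_filter, mem_filter, mem_range] at hi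
    have hiL : i < p.length := by rcases hi with hi | hi <;> exact hi.1
    obtain ⟨k, rfl⟩ : Even i := by
      rcases hi with hi | hi
      · exact Nat.not_odd_iff_even.mp (Nat.odd_add_one.mp
          (h.odd_of_getVert_mem p hu hiL (h.mem_of_mem_adj hu hi.2)))
      · exact h.even_of_getVert_mem p hu hiL.le (h.mem_of_mem_adj' hv hi.2.symm)
    exact mem_image.mpr ⟨k, mem_range.mpr (by omega), by omega⟩
  calc G.degree u + G.degree v ≤ #S + #T :=
        add_le_add hp.degree_le_card_adj_getVert_succ hp.degree_le_card_adj_getVert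
    _ = #(S ∪ T) := (card_union_of_disjoint hST).symm
    _ ≤ #((range n).image (2 * ·)) := card_le_card hsub
    _ ≤ n := card_image_le.trans (card_range n).le

lemma cycleGraph_isContained_of_forall_adj {s t : Finset V} {n : ℕ} (hs : #s = n) (ht : #t = n)
    (hadj : ∀ x ∈ s, ∀ y ∈ t, G.Adj x y) : cycleGraph (2 * n) ⊑ G := by
  let f : Fin (2 * n) → V := fun i =>
    if i.val % 2 = 0 then (s.equivFinOfCardEq hs).symm ⟨i / 2, by omega⟩
    else (t.equivFinOfCardEq ht).symm ⟨i / 2, by omega⟩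
  have hf : ∀ i : Fin (2 * n), i.val % 2 = 0 ∧ f i ∈ s ∨ i.val % 2 = 1 ∧ f i ∈ t := by
    intro i
    by_cases hi : i.val % 2 = 0
    · simp [f, hi]
    · simp [f, hi]
      omega
  have hsub : ∀ a b : Fin (2 * n), (a - b).val = 1 → a.val % 2 ≠ b.val % 2 := by
    intro a b h
    rcases le_or_gt b a with hle | hlt
    · rw [Fin.sub_val_of_le hle] at h
      omega
    · rw [Fin.coe_sub_iff_lt.mpr hlt] at h
      omega
  refine ⟨⟨⟨f, fun {a b} hab => ?_⟩, fun a b hab => ?_⟩⟩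
  · have hab' : a.val % 2 ≠ b.val % 2 := by
      rcases cycleGraph_adj'.mp hab with h | h
      exacts [hsub a b h, (hsub b a h).symm]
    rcases hf a with ⟨ha, ha'⟩ | ⟨ha, ha'⟩ <;>
      rcases hf b with ⟨hb, hb'⟩ | ⟨hb, hb'⟩
    · omega
    · exact hadj _ ha' _ hb'
    · exact (hadj _ hb' _ ha').symm
    · omega
  · change f a = f b at hab
    rcases hf a with ⟨ha, ha'⟩ | ⟨ha, ha'⟩ <;>
      rcases hf b with ⟨hb, hb'⟩ | ⟨hb, hb'⟩
    · simp [f, ha, hb] at hab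
      omega
    · exact absurd rfl (hadj _ ha' _ (hab ▸ hb')).ne
    · exact absurd rfl (hadj _ hb' _ (hab ▸ ha')).ne
    · simp [f, ha, hb] at hab
      omega

theorem IsBipartiteWith.card_edgeFinset_le [Fintype V] [DecidableEq V] [DecidableRel G.Adj]
    {s t : Finset V} (h : G.IsBipartiteWith s t) {n k : ℕ} (hs : #s = n) (ht : #t = n)
    (hu : u ∈ s) (hk : k ≤ G.degree u) (hdu : 2 * G.degree u ≤ n)
    (hore : ∀ w ∈ t, ¬G.Adj u w → G.degree u + G.degree w ≤ n) :
    (#G.edgeFinset : ℤ) ≤ n * (n - k) + k ^ 2 := by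
  set d := G.degree u
  have hN : G.neighborFinset u ⊆ t := isBipartiteWith_neighborFinset_subset h hu
  have hnbrs : ∑ w ∈ G.neighborFinset u, G.degree w ≤ d * n := by
    refine (sum_le_card_nsmul _ _ n fun w hw => ?_).trans_eq
      (by rw [card_neighborFinset_eq_degree, smul_eq_mul])
    exact hs ▸ isBipartiteWith_degree_le' h (hN hw)
  have hnonnbrs : ∑ w ∈ t \ G.neighborFinset u, G.degree w ≤ (n - d) * (n - d) := by
    refine (sum_le_card_nsmul _ _ (n - d) fun w hw => ?_).trans_eq (by
      rw [card_sdiff_of_subset hN, ht, card_neighborFinset_eq_degree, smul_eq_mul])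
    rw [mem_sdiff, mem_neighborFinset] at hw
    have := hore w hw.1 hw.2
    omega
  have hcount : #G.edgeFinset ≤ (n - d) * (n - d) + d * n := by
    rw [← isBipartiteWith_sum_degrees_eq_card_edges' h, ← sum_sdiff hN]
    omega
  have hdn : d ≤ n := by omega
  zify [hdn] at hcount hk hdu
  -- `n (n - k) + k² - ((n - d)² + d n) = (d - k) (n - d - k)`
  have hconvex : (0 : ℤ) ≤ (d - k) * (n - d - k) := mul_nonneg (by omega) (by omega)
  linarith

lemma IsBipartiteWith.sup_edge_s16 (h : G.IsBipartiteWith s t) (hu : u ∈ s) (hv : v ∈ t) :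
    (G ⊔ edge u v).IsBipartiteWith s t where
  disjoint := h.disjoint
  mem_of_adj x y hxy := by
    rcases hxy with hxy | hxy
    · exact h.mem_of_adj hxy
    · obtain ⟨⟨rfl, rfl⟩ | ⟨rfl, rfl⟩, -⟩ := (edge_adj ..).mp hxy
      exacts [Or.inl ⟨hu, hv⟩, Or.inr ⟨hv, hu⟩]

theorem degree_add_degree_le_of_maximal [Fintype V] [DecidableEq V]
    [DecidableRel H.Adj] {n : ℕ} (hV : Fintype.card V = 2 * n) (hn : 2 ≤ n)
    (hH : Maximal (fun H : SimpleGraph V => H.IsBipartiteWith s t ∧ ¬H.IsHamiltonian) H)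
    (hu : u ∈ s) (hv : v ∈ t) (huv : ¬H.Adj u v) : H.degree u + H.degree v ≤ n := by
  have hne : u ≠ v := fun h => Set.disjoint_left.mp hH.prop.1.disjoint hu (h ▸ hv)
  have : Nontrivial V := ⟨⟨u, v, hne⟩⟩
  have hham : (H ⊔ edge u v).IsHamiltonian := by
    by_contra h
    exact (lt_sup_edge _ _ _ hne huv).ne (hH.eq_of_le ⟨hH.prop.1.sup_edge_s16 hu hv, h⟩ le_sup_left)
  obtain ⟨p, hp⟩ := exists_isHamiltonian_walk_of_isHamiltonian_sup_edge hH.prop.2 hham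
  have := hH.prop.1.symm.degree_add_degree_le_of_isHamiltonian hV hn hH.prop.2 hp hv
  omega

lemma isHamiltonian_of_cycleGraph_isContained [Fintype V] [DecidableEq V]
    (hV : 3 ≤ Fintype.card V) (h : cycleGraph (Fintype.card V) ⊑ G) : G.IsHamiltonian := by
  obtain ⟨v, p, hp, hlen⟩ := (cycleGraph_isContained_iff hV).mp h
  exact fun _ => ⟨v, p, isHamiltonianCycle_iff_isCycle_and_length_eq.mpr ⟨hp, hlen⟩⟩

end SimpleGraph

open SimpleGraph

theorem stmt16_general {V : Type*} [Fintype V] [DecidableEq V] (n k : ℕ)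
    (G : SimpleGraph V) [DecidableRel G.Adj] (X Y : Finset V)
    (hdisj : Disjoint X Y) (hcov : X ∪ Y = Finset.univ)
    (hX : X.card = n) (hY : Y.card = n)
    (hbip : ∀ u v, G.Adj u v → (u ∈ X ∧ v ∈ Y) ∨ (u ∈ Y ∧ v ∈ X))
    (hkn : 3 * k + 2 ≤ n)
    (hδ : ∀ v : V, k ≤ G.degree v)
    (he : (n : ℤ) * ((n : ℤ) - k) + (k : ℤ) ^ 2 < (G.edgeFinset.card : ℤ)) :
    G.IsHamiltonian := by
  classical
  have hV : Fintype.card V = 2 * n := by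
    rw [← card_univ, ← hcov, card_union_of_disjoint hdisj, hX, hY, two_mul]
  by_contra hG
  obtain ⟨H, hGH, hH⟩ := Finite.exists_le_maximal
    (p := fun H : SimpleGraph V => H.IsBipartiteWith X Y ∧ ¬H.IsHamiltonian)
    ⟨⟨disjoint_coe.mpr hdisj, hbip⟩, hG⟩
  have hore : ∀ {a b}, a ∈ X → b ∈ Y → ¬H.Adj a b → H.degree a + H.degree b ≤ n :=
    degree_add_degree_le_of_maximal hV (by omega) hH
  obtain ⟨a, ha, b, hb, hab⟩ : ∃ a ∈ X, ∃ b ∈ Y, ¬H.Adj a b := by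
    by_contra! hall
    exact hH.prop.2 (isHamiltonian_of_cycleGraph_isContained (by omega)
      (hV ▸ cycleGraph_isContained_of_forall_adj hX hY hall))
  have hδH : ∀ v, k ≤ H.degree v := fun v => (hδ v).trans (degree_le_of_le hGH)
  have hH_edges : (#H.edgeFinset : ℤ) ≤ n * (n - k) + k ^ 2 := by
    have := hore ha hb hab
    rcases le_total (H.degree a) (H.degree b) with hle | hle
    · exact hH.prop.1.card_edgeFinset_le hX hY ha (hδH a) (by omega) fun w hw => hore ha hw
    · refine hH.prop.1.symm.card_edgeFinset_le hY hX hb (hδH b) (by omega) fun w hw hw' => ?_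
      have := hore hw hb fun h => hw' h.symm
      omega
  have : #G.edgeFinset ≤ #H.edgeFinset := card_le_card (edgeFinset_mono hGH)
  omega

/-- Moon–Moser-type corollary. A balanced bipartite graph of order `2n`
with `δ(G) ≥ k`, `1 ≤ k ≤ (n−2)/3`, and `e(G) > n(n−k) + k²` is Hamiltonian. -/
theorem stmt16 {V : Type*} [Fintype V] [DecidableEq V] (n k : ℕ)
    (G : SimpleGraph V) [DecidableRel G.Adj] (X Y : Finset V)
    (hdisj : Disjoint X Y) (hcov : X ∪ Y = Finset.univ)
    (hX : X.card = n) (hY : Y.card = n)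
    (hbip : ∀ u v, G.Adj u v → (u ∈ X ∧ v ∈ Y) ∨ (u ∈ Y ∧ v ∈ X))
    (hk : 1 ≤ k) (hkn : 3 * k + 2 ≤ n)
    (hδ : ∀ v : V, k ≤ G.degree v)
    (he : (n : ℤ) * ((n : ℤ) - k) + (k : ℤ) ^ 2 < (G.edgeFinset.card : ℤ)) :
    G.IsHamiltonian :=
  stmt16_general n k G X Y hdisj hcov hX hY hbip hkn hδ he
end

section
/- Let G be an (n+p+2)-closed balanced bipartite graph of order 2n with parts X, Y of size n, where k ≥ p ≥ 0 and n ≥ 2k − p + 2, and suppose e(G) > n(n−k+p−1) + (k+2)(k−p+1). Then the set U = {x ∈ X : d_G(x) ≥ (n+p+2)/2} has size at least k + 2, and similarly for the corresponding set W ⊆ Y; moreover every vertex of U is adjacent to every vertex of W, so K_{k+2,k+2} ⊆ G. -/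
/-!
Every edge has exactly one end in `X`, so the degrees over `X` sum to `e(G)`, and each is at most
`|Y| = n`. If at most `k + 1` vertices of `X` had degree `≥ (n+p+2)/2`, the others having degree
`≤ (n+p+1)/2`, then `2 e(G) ≤ 2n(k+1) + (n-k-1)(n+p+1)`, which the edge bound rules out; the same
holds for `Y`. Two vertices of degree `≥ (n+p+2)/2` on opposite sides have degree sum `≥ n+p+2`,
so closedness forces them to be adjacent.
-/

open Finset

lemma Finset.sum_le_card_filter_mul_add_card_filter_not_mul {α : Type*} {s : Finset α}
    {f : α → ℕ} (P : α → Prop) [DecidablePred P] {A B : ℕ}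
    (hP : ∀ a ∈ s, P a → f a ≤ A) (hnP : ∀ a ∈ s, ¬ P a → f a ≤ B) :
    ∑ a ∈ s, f a ≤ #{a ∈ s | P a} * A + #{a ∈ s | ¬ P a} * B := by
  rw [← sum_filter_add_sum_filter_not s P]
  gcongr
  · simpa using sum_le_card_nsmul _ f A fun a ha => hP a (mem_filter.1 ha).1 (mem_filter.1 ha).2
  · simpa using sum_le_card_nsmul _ f B fun a ha => hnP a (mem_filter.1 ha).1 (mem_filter.1 ha).2

/-- The left side is linear in `u` with slope `n - p - 1 ≥ 0`, so `u = k + 1` is the worst case. -/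
lemma count_mul_add_le_edge_bound {n k p u : ℤ} (hkp : p ≤ k)
    (hn : 2 * k + 2 ≤ n + p) (hu : u ≤ k + 1) :
    u * (2 * n) + (n - u) * (n + p + 1) ≤ 2 * (n * (n - k + p - 1) + (k + 2) * (k - p + 1)) := by
  nlinarith [mul_nonneg (by linarith : (0:ℤ) ≤ n - (2 * k - p + 2)) (by linarith : (0:ℤ) ≤ n - k - 2),
    mul_nonneg (by linarith : (0:ℤ) ≤ n - p - 1) (by linarith : (0:ℤ) ≤ k + 1 - u)]

namespace SimpleGraph

variable {V : Type*} [Fintype V] {G : SimpleGraph V} [DecidableRel G.Adj]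

lemma IsBipartiteWith.le_card_filter_le_two_mul_degree {X Y : Finset V} {n k p : ℕ}
    (hG : G.IsBipartiteWith X Y) (hX : #X = n) (hY : #Y = n) (hkp : p ≤ k)
    (hn : 2 * k + 2 ≤ n + p)
    (he : (n : ℤ) * ((n : ℤ) - k + p - 1) + ((k : ℤ) + 2) * ((k : ℤ) - p + 1) < #G.edgeFinset) :
    k + 2 ≤ #{x ∈ X | n + p + 2 ≤ 2 * G.degree x} := by
  by_contra! hfew
  have hsplit := card_filter_add_card_filter_not (s := X) (fun x => n + p + 2 ≤ 2 * G.degree x)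
  have hsum : 2 * #G.edgeFinset ≤ #{x ∈ X | n + p + 2 ≤ 2 * G.degree x} * (2 * n) +
      #{x ∈ X | ¬ n + p + 2 ≤ 2 * G.degree x} * (n + p + 1) := by
    rw [← isBipartiteWith_sum_degrees_eq_card_edges hG, mul_sum]
    refine sum_le_card_filter_mul_add_card_filter_not_mul _ (fun x hx _ => ?_) fun x _ hx => ?_
    · have := hY ▸ isBipartiteWith_degree_le hG (mem_coe.2 hx)
      omega
    · omega
  generalize #{x ∈ X | n + p + 2 ≤ 2 * G.degree x} = u at hfew hsplit hsum
  generalize #{x ∈ X | ¬ n + p + 2 ≤ 2 * G.degree x} = w at hsplit hsum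
  have hbound := count_mul_add_le_edge_bound (n := (n : ℤ)) (k := k) (p := p) (u := u)
    (by exact_mod_cast hkp) (by exact_mod_cast hn) (by exact_mod_cast Nat.le_of_lt_succ hfew)
  have hlow : (n : ℤ) - u = w := by omega
  rw [hlow] at hbound
  zify at hsum
  linarith

end SimpleGraph

open SimpleGraph in
theorem stmt17_general {V : Type*} [Fintype V] (n k p : ℕ)
    (G : SimpleGraph V) [DecidableRel G.Adj] (X Y : Finset V)
    (hdisj : Disjoint X Y)
    (hX : X.card = n) (hY : Y.card = n)
    (hbip : ∀ u v, G.Adj u v → (u ∈ X ∧ v ∈ Y) ∨ (u ∈ Y ∧ v ∈ X))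
    (hkp : p ≤ k) (hn : 2 * k + 2 ≤ n + p)
    (hclosed : ∀ x ∈ X, ∀ y ∈ Y, ¬ G.Adj x y →
      G.degree x + G.degree y < n + p + 2)
    (he : (n : ℤ) * ((n : ℤ) - k + p - 1) + ((k : ℤ) + 2) * ((k : ℤ) - p + 1)
        < (G.edgeFinset.card : ℤ)) :
    k + 2 ≤ (X.filter fun x => n + p + 2 ≤ 2 * G.degree x).card ∧
    k + 2 ≤ (Y.filter fun y => n + p + 2 ≤ 2 * G.degree y).card ∧
    (∀ u ∈ X.filter fun x => n + p + 2 ≤ 2 * G.degree x,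
      ∀ w ∈ Y.filter fun y => n + p + 2 ≤ 2 * G.degree y, G.Adj u w) ∧
    ∃ A B : Finset V, A ⊆ X ∧ B ⊆ Y ∧ A.card = k + 2 ∧ B.card = k + 2 ∧
      ∀ a ∈ A, ∀ b ∈ B, G.Adj a b := by
  have hG : G.IsBipartiteWith X Y := ⟨disjoint_coe.2 hdisj, hbip⟩
  have hU := hG.le_card_filter_le_two_mul_degree hX hY hkp hn he
  have hW := hG.symm.le_card_filter_le_two_mul_degree hY hX hkp hn he
  have hadj : ∀ u ∈ X.filter fun x => n + p + 2 ≤ 2 * G.degree x,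
      ∀ w ∈ Y.filter fun y => n + p + 2 ≤ 2 * G.degree y, G.Adj u w := by
    intro u hu w hw
    rw [mem_filter] at hu hw
    by_contra hnadj
    have := hclosed u hu.1 w hw.1 hnadj
    omega
  obtain ⟨A, hAU, hA⟩ := exists_subset_card_eq hU
  obtain ⟨B, hBW, hB⟩ := exists_subset_card_eq hW
  exact ⟨hU, hW, hadj, A, B, hAU.trans (filter_subset _ _), hBW.trans (filter_subset _ _), hA, hB,
    fun a ha b hb => hadj a (hAU ha) b (hBW hb)⟩

/-- In an `(n+p+2)`-closed balanced bipartite graph with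
`k ≥ p ≥ 0`, `n ≥ 2k − p + 2` and `e(G) > n(n−k+p−1) + (k+2)(k−p+1)`, the sets
`U = {x ∈ X : d(x) ≥ (n+p+2)/2}` and `W = {y ∈ Y : d(y) ≥ (n+p+2)/2}` have size at least
`k + 2`, every vertex of `U` is adjacent to every vertex of `W`, and `K_{k+2,k+2} ⊆ G`. -/
theorem stmt17 {V : Type*} [Fintype V] [DecidableEq V] (n k p : ℕ)
    (G : SimpleGraph V) [DecidableRel G.Adj] (X Y : Finset V)
    (hdisj : Disjoint X Y) (hcov : X ∪ Y = Finset.univ)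
    (hX : X.card = n) (hY : Y.card = n)
    (hbip : ∀ u v, G.Adj u v → (u ∈ X ∧ v ∈ Y) ∨ (u ∈ Y ∧ v ∈ X))
    (hkp : p ≤ k) (hn : 2 * k + 2 ≤ n + p)
    (hclosed : ∀ x ∈ X, ∀ y ∈ Y, ¬ G.Adj x y →
      G.degree x + G.degree y < n + p + 2)
    (he : (n : ℤ) * ((n : ℤ) - k + p - 1) + ((k : ℤ) + 2) * ((k : ℤ) - p + 1)
        < (G.edgeFinset.card : ℤ)) :
    k + 2 ≤ (X.filter fun x => n + p + 2 ≤ 2 * G.degree x).card ∧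
    k + 2 ≤ (Y.filter fun y => n + p + 2 ≤ 2 * G.degree y).card ∧
    (∀ u ∈ X.filter fun x => n + p + 2 ≤ 2 * G.degree x,
      ∀ w ∈ Y.filter fun y => n + p + 2 ≤ 2 * G.degree y, G.Adj u w) ∧
    ∃ A B : Finset V, A ⊆ X ∧ B ⊆ Y ∧ A.card = k + 2 ∧ B.card = k + 2 ∧
      ∀ a ∈ A, ∀ b ∈ B, G.Adj a b :=
  stmt17_general n k p G X Y hdisj hX hY hbip hkp hn hclosed he
end
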